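/- arXiv:2111.15292 — 7 statements merged into one kernel-verified Lean document; each statement's English description precedes it below -/
import Mathlib

section
/- For constants β > 0 and θ > 0, there exists a constant C > 0 such that for all s ≥ 0, e^{-θs} ∫₀ˢ e^{θr} r^{β-1} dr ≤ C · min(s^{β-1}, s^β). -/
open MeasureTheory Real Set Filter

/-! Bounding the kernel `exp (-θ (s - r))` by `1` gives `s ^ β / β`. For the bound by
`s ^ (β - 1)`, split `(0, s]` at `s / 2`: on the left half the kernel is at most
`exp (-θ s / 2) ≤ 2 / (θ s)`, which turns `∫ r ^ (β - 1) = (s / 2) ^ β / β` into a multiple of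
`s ^ (β - 1)`; on the right half `r ^ (β - 1)` is comparable to `s ^ (β - 1)` and the kernel
integrates to at most `1 / θ`. -/

lemma integrableOn_rpow_Ioc {γ : ℝ} (hγ : -1 < γ) (s : ℝ) :
    IntegrableOn (fun r : ℝ => r ^ γ) (Ioc 0 s) := by
  rcases le_or_gt s 0 with hs | hs
  · simp [Ioc_eq_empty_of_le hs]
  · exact (intervalIntegrable_iff_integrableOn_Ioc_of_le hs.le).1
      (intervalIntegral.intervalIntegrable_rpow' hγ)

lemma setIntegral_rpow_sub_one_Ioc {β : ℝ} (hβ : 0 < β) {a : ℝ} (ha : 0 ≤ a) :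
    ∫ r in Ioc 0 a, r ^ (β - 1) = a ^ β / β := by
  rw [← intervalIntegral.integral_of_le ha, integral_rpow (Or.inl (by linarith)),
    sub_add_cancel, zero_rpow hβ.ne', sub_zero]

lemma setIntegral_exp_mul_Ioc_le {θ : ℝ} (hθ : 0 < θ) {a b : ℝ} (hab : a ≤ b) :
    ∫ r in Ioc a b, exp (θ * r) ≤ exp (θ * b) / θ := by
  rw [← intervalIntegral.integral_of_le hab,
    intervalIntegral.integral_comp_mul_left (fun y => exp y) hθ.ne', integral_exp, smul_eq_mul,
    inv_mul_eq_div]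
  gcongr
  linarith [exp_pos (θ * a)]

lemma rpow_le_rpow_add_rpow {a b r : ℝ} (γ : ℝ) (ha : 0 < a) (har : a ≤ r) (hrb : r ≤ b) :
    r ^ γ ≤ a ^ γ + b ^ γ := by
  rcases le_total 0 γ with hγ | hγ
  · linarith [rpow_le_rpow (ha.trans_le har).le hrb hγ, rpow_nonneg ha.le γ]
  · linarith [rpow_le_rpow_of_nonpos ha har hγ, rpow_nonneg (ha.trans_le (har.trans hrb)).le γ]

lemma exp_neg_le_inv {x : ℝ} (hx : 0 < x) : exp (-x) ≤ x⁻¹ := by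
  rw [le_inv_comm₀ (exp_pos _) hx, exp_neg, inv_inv]
  linarith [add_one_le_exp x]

lemma integrableOn_exp_mul_mul_rpow {β : ℝ} (hβ : 0 < β) (θ s : ℝ) :
    IntegrableOn (fun r : ℝ => exp (θ * r) * r ^ (β - 1)) (Ioc 0 s) :=
  (integrableOn_rpow_Ioc (by linarith) s).continuousOn_mul_of_subset (by fun_prop)
    isCompact_Icc measurableSet_Ioc Ioc_subset_Icc_self

section
variable {β θ : ℝ}

lemma setIntegral_exp_mul_mul_rpow_le (hβ : 0 < β) (hθ : 0 ≤ θ) {t : ℝ} (ht : 0 ≤ t) :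
    ∫ r in Ioc 0 t, exp (θ * r) * r ^ (β - 1) ≤ exp (θ * t) * (t ^ β / β) := by
  rw [← setIntegral_rpow_sub_one_Ioc hβ ht, ← integral_const_mul]
  refine setIntegral_mono_on (integrableOn_exp_mul_mul_rpow hβ θ t)
    ((integrableOn_rpow_Ioc (by linarith) t).const_mul _) measurableSet_Ioc fun r hr => ?_
  gcongr
  · exact rpow_nonneg hr.1.le _
  · exact hr.2

lemma setIntegral_exp_mul_mul_rpow_Ioc_le (hθ : 0 < θ) {a b : ℝ} (ha : 0 < a) (hab : a ≤ b) :
    ∫ r in Ioc a b, exp (θ * r) * r ^ (β - 1)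
      ≤ (a ^ (β - 1) + b ^ (β - 1)) * (exp (θ * b) / θ) := by
  calc ∫ r in Ioc a b, exp (θ * r) * r ^ (β - 1)
      ≤ ∫ r in Ioc a b, (a ^ (β - 1) + b ^ (β - 1)) * exp (θ * r) := by
        refine setIntegral_mono_on ?_ ?_ measurableSet_Ioc fun r hr => ?_
        · refine ContinuousOn.integrableOn_Icc ?_ |>.mono_set Ioc_subset_Icc_self
          exact (continuous_exp.comp (continuous_const_mul θ)).continuousOn.mul
            (continuousOn_id.rpow_const fun r hr => Or.inl (ha.trans_le hr.1).ne')
        · exact (Continuous.integrableOn_Ioc (by fun_prop))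
        · rw [mul_comm]
          exact mul_le_mul_of_nonneg_right (rpow_le_rpow_add_rpow _ ha hr.1.le hr.2) (exp_nonneg _)
    _ ≤ (a ^ (β - 1) + b ^ (β - 1)) * (exp (θ * b) / θ) := by
        rw [integral_const_mul]
        exact mul_le_mul_of_nonneg_left (setIntegral_exp_mul_Ioc_le hθ hab)
          (add_nonneg (rpow_nonneg ha.le _) (rpow_nonneg (ha.le.trans hab) _))

lemma exp_neg_mul_setIntegral_le_rpow (hβ : 0 < β) (hθ : 0 ≤ θ) {s : ℝ} (hs : 0 ≤ s) :
    exp (-θ * s) * ∫ r in Ioc 0 s, exp (θ * r) * r ^ (β - 1) ≤ s ^ β / β :=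
  calc exp (-θ * s) * ∫ r in Ioc 0 s, exp (θ * r) * r ^ (β - 1)
      ≤ exp (-θ * s) * (exp (θ * s) * (s ^ β / β)) :=
        mul_le_mul_of_nonneg_left (setIntegral_exp_mul_mul_rpow_le hβ hθ hs) (exp_nonneg _)
    _ = s ^ β / β := by rw [← mul_assoc, ← exp_add, neg_mul, neg_add_cancel, exp_zero, one_mul]

lemma half_rpow_sub_one (β : ℝ) {s : ℝ} (hs : 0 ≤ s) :
    (s / 2) ^ (β - 1) = 2 ^ (1 - β) * s ^ (β - 1) := by
  rw [div_rpow hs zero_le_two, div_eq_mul_inv, ← rpow_neg zero_le_two, neg_sub, mul_comm]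

lemma exp_neg_mul_setIntegral_le_rpow_sub_one (hβ : 0 < β) (hθ : 0 < θ) {s : ℝ} (hs : 0 < s) :
    exp (-θ * s) * ∫ r in Ioc 0 s, exp (θ * r) * r ^ (β - 1)
      ≤ (2 ^ (1 - β) * (β⁻¹ + 1) + 1) / θ * s ^ (β - 1) := by
  set h := s / 2
  have hh : 0 < h := half_pos hs
  have hhs : h ≤ s := half_le_self hs.le
  have hsplit : ∫ r in Ioc 0 s, exp (θ * r) * r ^ (β - 1)
      = (∫ r in Ioc 0 h, exp (θ * r) * r ^ (β - 1)) + ∫ r in Ioc h s, exp (θ * r) * r ^ (β - 1) := by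
    have hint := integrableOn_exp_mul_mul_rpow hβ θ s
    rw [← Ioc_union_Ioc_eq_Ioc hh.le hhs, setIntegral_union (Ioc_disjoint_Ioc_of_le le_rfl)
      measurableSet_Ioc (hint.mono_set (Ioc_subset_Ioc_right hhs))
      (hint.mono_set (Ioc_subset_Ioc_left hh.le))]
  have hnear : exp (-θ * s) * ∫ r in Ioc 0 h, exp (θ * r) * r ^ (β - 1)
      ≤ h ^ (β - 1) / (θ * β) :=
    calc exp (-θ * s) * ∫ r in Ioc 0 h, exp (θ * r) * r ^ (β - 1)
        ≤ exp (-θ * s) * (exp (θ * h) * (h ^ β / β)) :=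
          mul_le_mul_of_nonneg_left (setIntegral_exp_mul_mul_rpow_le hβ hθ.le hh.le) (exp_nonneg _)
      _ = exp (-(θ * h)) * (h ^ β / β) := by
          rw [← mul_assoc, ← exp_add]; congr 2; ring
      _ ≤ (θ * h)⁻¹ * (h ^ β / β) := by
          gcongr; exact exp_neg_le_inv (by positivity)
      _ = h ^ (β - 1) / (θ * β) := by
          rw [rpow_sub_one hh.ne']; field_simp
  have hfar : exp (-θ * s) * ∫ r in Ioc h s, exp (θ * r) * r ^ (β - 1)
      ≤ (h ^ (β - 1) + s ^ (β - 1)) / θ :=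
    calc exp (-θ * s) * ∫ r in Ioc h s, exp (θ * r) * r ^ (β - 1)
        ≤ exp (-θ * s) * ((h ^ (β - 1) + s ^ (β - 1)) * (exp (θ * s) / θ)) :=
          mul_le_mul_of_nonneg_left (setIntegral_exp_mul_mul_rpow_Ioc_le hθ hh hhs) (exp_nonneg _)
      _ = (h ^ (β - 1) + s ^ (β - 1)) / θ := by
          rw [neg_mul, exp_neg]; field_simp
  calc exp (-θ * s) * ∫ r in Ioc 0 s, exp (θ * r) * r ^ (β - 1)
      ≤ h ^ (β - 1) / (θ * β) + (h ^ (β - 1) + s ^ (β - 1)) / θ := by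
        rw [hsplit, mul_add]; exact add_le_add hnear hfar
    _ = (2 ^ (1 - β) * (β⁻¹ + 1) + 1) / θ * s ^ (β - 1) := by
        rw [half_rpow_sub_one β hs.le]; field_simp; ring

end

theorem stmt1 (β θ : ℝ) (hβ : 0 < β) (hθ : 0 < θ) :
    ∃ C > (0:ℝ), ∀ s ≥ (0:ℝ),
      Real.exp (-θ * s) * (∫ r in Set.Ioc (0:ℝ) s, Real.exp (θ * r) * r ^ (β - 1))
        ≤ C * min (s ^ (β - 1)) (s ^ β) := by
  set C₁ := (2 ^ (1 - β) * (β⁻¹ + 1) + 1) / θ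
  refine ⟨C₁ + β⁻¹, by positivity, fun s hs => ?_⟩
  rcases hs.eq_or_lt with rfl | hs
  · simp only [Ioc_self, Measure.restrict_empty, integral_zero_measure, mul_zero]
    positivity
  rw [mul_min_of_nonneg _ _ (by positivity)]
  refine le_min ?_ ?_
  · calc _ ≤ C₁ * s ^ (β - 1) := exp_neg_mul_setIntegral_le_rpow_sub_one hβ hθ hs
      _ ≤ (C₁ + β⁻¹) * s ^ (β - 1) := by gcongr; exact le_add_of_nonneg_right (by positivity)
  · calc _ ≤ s ^ β / β := exp_neg_mul_setIntegral_le_rpow hβ hθ.le hs.le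
      _ ≤ (C₁ + β⁻¹) * s ^ β := by
          rw [div_eq_inv_mul]; gcongr; exact le_add_of_nonneg_left (by positivity)
end

section
/- Let H ∈ (0,1/3) and ψ(w,T) = ∫₀ᵀ e^{-|u-w|} u^{H-1} du. Then there exists C > 0 independent of T such that for all T ≥ 1, ∫₀ᵀ ψ(w,T)·((T-w)^{2H-1} + w^{2H-1}) dw ≤ C. -/
open MeasureTheory Real Set Filter

lemma aux_exp_abs_integrable (w : ℝ) :
    Integrable (fun u : ℝ => Real.exp (-|u - w|)) := by
  have h1 : IntegrableOn (fun u : ℝ => Real.exp u * Real.exp (-w)) (Iic w) :=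
    (integrableOn_exp_Iic w).mul_const _
  have h2 : IntegrableOn (fun u : ℝ => Real.exp w * Real.exp (-u)) (Ioi w) := by
    have h := exp_neg_integrableOn_Ioi w (b := 1) one_pos
    simp only [neg_mul, one_mul] at h
    exact h.const_mul _
  refine Integrable.mono'
    ((h1.integrable_indicator measurableSet_Iic).add (h2.integrable_indicator measurableSet_Ioi))
    ?_ ?_
  · exact (Real.continuous_exp.comp ((continuous_abs.comp (continuous_sub_right w)).neg)).aestronglyMeasurable
  · filter_upwards with u
    rw [Real.norm_eq_abs, abs_of_nonneg (Real.exp_pos _).le]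
    simp only [Pi.add_apply]
    rcases le_or_gt u w with h | h
    · rw [Set.indicator_of_mem (by exact h : u ∈ Iic w),
        Set.indicator_of_notMem (by simpa using h), abs_of_nonpos (by linarith), add_zero,
        ← Real.exp_add]
      ring_nf
      exact le_refl _
    · rw [Set.indicator_of_notMem (by simpa using h),
        Set.indicator_of_mem (by exact h : u ∈ Ioi w), abs_of_nonneg (by linarith), zero_add,
        ← Real.exp_add]
      ring_nf
      exact le_refl _

lemma aux_exp_abs_integral_le (w : ℝ) : (∫ u : ℝ, Real.exp (-|u - w|)) ≤ 2 := by
  have h1 : IntegrableOn (fun u : ℝ => Real.exp u * Real.exp (-w)) (Iic w) :=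
    (integrableOn_exp_Iic w).mul_const _
  have h2 : IntegrableOn (fun u : ℝ => Real.exp w * Real.exp (-u)) (Ioi w) := by
    have h := exp_neg_integrableOn_Ioi w (b := 1) one_pos
    simp only [neg_mul, one_mul] at h
    exact h.const_mul _
  have hle : (∫ u : ℝ, Real.exp (-|u - w|)) ≤
      ∫ u : ℝ, ((Iic w).indicator (fun u : ℝ => Real.exp u * Real.exp (-w)) u
        + (Ioi w).indicator (fun u : ℝ => Real.exp w * Real.exp (-u)) u) := by
    refine integral_mono (aux_exp_abs_integrable w)
      ((h1.integrable_indicator measurableSet_Iic).add (h2.integrable_indicator measurableSet_Ioi))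
      fun u => ?_
    simp only [Pi.add_apply]
    rcases le_or_gt u w with h | h
    · rw [Set.indicator_of_mem (by exact h : u ∈ Iic w),
        Set.indicator_of_notMem (by simpa using h), abs_of_nonpos (by linarith), add_zero,
        ← Real.exp_add]
      ring_nf
      exact le_refl _
    · rw [Set.indicator_of_notMem (by simpa using h),
        Set.indicator_of_mem (by exact h : u ∈ Ioi w), abs_of_nonneg (by linarith), zero_add,
        ← Real.exp_add]
      ring_nf
      exact le_refl _
  refine hle.trans ?_
  rw [integral_add (h1.integrable_indicator measurableSet_Iic)
    (h2.integrable_indicator measurableSet_Ioi),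
    integral_indicator measurableSet_Iic, integral_indicator measurableSet_Ioi,
    integral_mul_const, integral_const_mul, integral_exp_Iic, integral_exp_neg_Ioi,
    ← Real.exp_add]
  norm_num

lemma aux_setint_exp_abs_le (w : ℝ) (s : Set ℝ) :
    (∫ u in s, Real.exp (-|u - w|)) ≤ 2 :=
  (setIntegral_le_integral (aux_exp_abs_integrable w)
    (ae_of_all _ fun u => (Real.exp_pos _).le)).trans (aux_exp_abs_integral_le w)

lemma aux_rpow_integrableOn {r : ℝ} (hr : -1 < r) {a : ℝ} (ha : 0 ≤ a) :
    IntegrableOn (fun x : ℝ => x ^ r) (Ioc 0 a) := by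
  have := intervalIntegral.intervalIntegrable_rpow' (a := 0) (b := a) hr
  rwa [intervalIntegrable_iff_integrableOn_Ioc_of_le ha] at this

lemma aux_rpow_integral {r : ℝ} (hr : -1 < r) {a : ℝ} (ha : 0 ≤ a) :
    (∫ x in Ioc (0:ℝ) a, x ^ r) = a ^ (r + 1) / (r + 1) := by
  rw [← intervalIntegral.integral_of_le ha, integral_rpow (Or.inl hr),
    Real.zero_rpow (by linarith : r + 1 ≠ 0), sub_zero]

lemma aux_two_rpow_le {e : ℝ} (he : e ≤ 1) : (2:ℝ) ^ e ≤ 2 := by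
  calc (2:ℝ) ^ e ≤ (2:ℝ) ^ (1:ℝ) := Real.rpow_le_rpow_of_exponent_le one_le_two he
  _ = 2 := Real.rpow_one 2

lemma aux_half_rpow {w e : ℝ} (hw : 0 < w) : (w/2) ^ e = w ^ e * 2 ^ (-e) := by
  rw [Real.div_rpow hw.le (by norm_num : (0:ℝ) ≤ 2), Real.rpow_neg (by norm_num : (0:ℝ) ≤ 2),
    div_eq_mul_inv]

lemma psi_le_A {H : ℝ} (h0 : 0 < H) (h1 : H < 1) {T w : ℝ} (hT : 1 ≤ T)
    (hw : w ∈ Set.Ioc (0:ℝ) T) :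
    (∫ u in Set.Ioc (0:ℝ) T, Real.exp (-|u - w|) * u ^ (H - 1))
      ≤ (2/H + 4) * w ^ (H - 1) := by
  obtain ⟨hw0, hwT⟩ := hw
  set s := w/2 with hs
  have hs0 : 0 < s := by positivity
  have hg1 : Integrable ((Ioc (0:ℝ) s).indicator fun u : ℝ => Real.exp (-s) * u ^ (H - 1)) :=
    IntegrableOn.integrable_indicator
      ((aux_rpow_integrableOn (by linarith) hs0.le).const_mul _) measurableSet_Ioc
  have hg2 : Integrable (fun u : ℝ => s ^ (H - 1) * Real.exp (-|u - w|)) :=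
    (aux_exp_abs_integrable w).const_mul _
  have key : ∀ u ∈ Ioc (0:ℝ) T,
      Real.exp (-|u - w|) * u ^ (H - 1)
        ≤ (Ioc (0:ℝ) s).indicator (fun u : ℝ => Real.exp (-s) * u ^ (H - 1)) u
          + s ^ (H - 1) * Real.exp (-|u - w|) := by
    intro u hu
    rcases le_or_gt u s with h | h
    · rw [Set.indicator_of_mem (show u ∈ Ioc (0:ℝ) s from ⟨hu.1, h⟩)]
      have habs : s ≤ |u - w| := by
        rw [abs_of_nonpos (by simp only [hs] at h ⊢; linarith)]
        simp only [hs] at h ⊢; linarith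
      have : Real.exp (-|u - w|) ≤ Real.exp (-s) := Real.exp_le_exp.mpr (by linarith)
      nlinarith [Real.rpow_nonneg hu.1.le (H - 1), (Real.exp_pos (-|u - w|)).le,
        mul_nonneg (Real.rpow_nonneg hs0.le (H - 1)) (Real.exp_pos (-|u - w|)).le,
        mul_le_mul_of_nonneg_right this (Real.rpow_nonneg hu.1.le (H - 1))]
    · rw [Set.indicator_of_notMem (fun hmem => absurd hmem.2 (not_le.mpr h)), zero_add]
      have hus : u ^ (H - 1) ≤ s ^ (H - 1) :=
        Real.rpow_le_rpow_of_nonpos hs0 h.le (by linarith)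
      calc Real.exp (-|u - w|) * u ^ (H - 1) ≤ Real.exp (-|u - w|) * s ^ (H - 1) :=
            mul_le_mul_of_nonneg_left hus (Real.exp_pos _).le
        _ = s ^ (H - 1) * Real.exp (-|u - w|) := mul_comm _ _
  calc (∫ u in Set.Ioc (0:ℝ) T, Real.exp (-|u - w|) * u ^ (H - 1))
      ≤ ∫ u in Set.Ioc (0:ℝ) T,
          ((Ioc (0:ℝ) s).indicator (fun u : ℝ => Real.exp (-s) * u ^ (H - 1)) u
            + s ^ (H - 1) * Real.exp (-|u - w|)) := by
        refine integral_mono_of_nonneg ?_ ((hg1.add hg2).restrict) ?_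
        · exact (ae_restrict_iff' measurableSet_Ioc).mpr (ae_of_all _ fun u hu =>
            mul_nonneg (Real.exp_pos _).le (Real.rpow_nonneg hu.1.le _))
        · exact (ae_restrict_iff' measurableSet_Ioc).mpr (ae_of_all _ key)
    _ = (∫ u in Set.Ioc (0:ℝ) T,
            (Ioc (0:ℝ) s).indicator (fun u : ℝ => Real.exp (-s) * u ^ (H - 1)) u)
        + ∫ u in Set.Ioc (0:ℝ) T, s ^ (H - 1) * Real.exp (-|u - w|) :=
        integral_add hg1.restrict hg2.restrict
    _ ≤ (∫ u : ℝ, (Ioc (0:ℝ) s).indicator (fun u : ℝ => Real.exp (-s) * u ^ (H - 1)) u)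
        + s ^ (H - 1) * 2 := by
        refine add_le_add (setIntegral_le_integral hg1 (ae_of_all _ fun u => ?_)) ?_
        · exact Set.indicator_nonneg (fun x hx =>
            mul_nonneg (Real.exp_pos _).le (Real.rpow_nonneg hx.1.le _)) u
        · rw [integral_const_mul]
          exact mul_le_mul_of_nonneg_left (aux_setint_exp_abs_le w _)
            (Real.rpow_nonneg hs0.le _)
    _ = Real.exp (-s) * (s ^ (H - 1 + 1) / (H - 1 + 1)) + s ^ (H - 1) * 2 := by
        rw [integral_indicator measurableSet_Ioc, integral_const_mul,
          aux_rpow_integral (by linarith) hs0.le]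
    _ ≤ (1/H) * s ^ (H - 1) + s ^ (H - 1) * 2 := by
        have hexp : Real.exp (-s) * s ≤ 1 := by
          rw [Real.exp_neg, inv_mul_le_iff₀ (Real.exp_pos s)]
          nlinarith [Real.add_one_le_exp s]
        have hpow : s ^ (H - 1 + 1) = s * s ^ (H - 1) := by
          rw [add_comm, Real.rpow_add hs0, Real.rpow_one]
        have h2 : H - 1 + 1 = H := by ring
        rw [hpow, h2]
        have hnn : (0:ℝ) ≤ s ^ (H - 1) := Real.rpow_nonneg hs0.le _
        have e1 : Real.exp (-s) * (s * s ^ (H - 1) / H)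
            = Real.exp (-s) * s * (s ^ (H - 1) / H) := by ring
        rw [e1]
        have hk := mul_le_mul_of_nonneg_right hexp (div_nonneg hnn h0.le)
        rw [one_mul] at hk
        have e2 : (1/H) * s ^ (H - 1) = s ^ (H - 1) / H := by ring
        linarith [hk, e2.le, e2.ge]
    _ = (1/H + 2) * s ^ (H - 1) := by ring
    _ ≤ (1/H + 2) * (w ^ (H - 1) * 2) := by
        have : s ^ (H - 1) = w ^ (H - 1) * 2 ^ (1 - H) := by
          rw [hs, aux_half_rpow hw0, neg_sub]
        rw [this]
        have h2 : (2:ℝ) ^ (1 - H) ≤ 2 := aux_two_rpow_le (by linarith)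
        have hw' : (0:ℝ) ≤ w ^ (H - 1) := Real.rpow_nonneg hw0.le _
        have hc : (0:ℝ) ≤ 1/H + 2 := by positivity
        exact mul_le_mul_of_nonneg_left (mul_le_mul_of_nonneg_left h2 hw') hc
    _ = (2/H + 4) * w ^ (H - 1) := by ring

lemma psi_le_B {H : ℝ} (h0 : 0 < H) (h1 : H < 1) {T w : ℝ} (hT : 1 ≤ T)
    (hw : w ∈ Set.Ioc (0:ℝ) 1) :
    (∫ u in Set.Ioc (0:ℝ) T, Real.exp (-|u - w|) * u ^ (H - 1))
      ≤ Real.exp 1 * (1/H + 1) := by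
  obtain ⟨hw0, hw1⟩ := hw
  have hg1 : Integrable ((Ioc (0:ℝ) 1).indicator fun u : ℝ => Real.exp 1 * u ^ (H - 1)) :=
    IntegrableOn.integrable_indicator
      ((aux_rpow_integrableOn (by linarith) one_pos.le).const_mul _) measurableSet_Ioc
  have hg2 : Integrable ((Ioi (1:ℝ)).indicator fun u : ℝ => Real.exp 1 * Real.exp (-u)) := by
    refine (IntegrableOn.integrable_indicator ?_ measurableSet_Ioi)
    have h := exp_neg_integrableOn_Ioi (1:ℝ) (b := 1) one_pos
    simp only [neg_mul, one_mul] at h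
    exact h.const_mul _
  have key : ∀ u ∈ Ioc (0:ℝ) T,
      Real.exp (-|u - w|) * u ^ (H - 1)
        ≤ (Ioc (0:ℝ) 1).indicator (fun u : ℝ => Real.exp 1 * u ^ (H - 1)) u
          + (Ioi (1:ℝ)).indicator (fun u : ℝ => Real.exp 1 * Real.exp (-u)) u := by
    intro u hu
    rcases le_or_gt u 1 with h | h
    · rw [Set.indicator_of_mem (show u ∈ Ioc (0:ℝ) 1 from ⟨hu.1, h⟩), Set.indicator_of_notMem (by simpa using h), add_zero]
      have he : Real.exp (-|u - w|) ≤ 1 := Real.exp_le_one_iff.mpr (neg_nonpos.mpr (abs_nonneg _))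
      have h1e : (1:ℝ) ≤ Real.exp 1 := by linarith [Real.add_one_le_exp (1:ℝ)]
      nlinarith [Real.rpow_nonneg hu.1.le (H - 1), (Real.exp_pos (-|u - w|)).le]
    · rw [Set.indicator_of_notMem (fun hmem => absurd hmem.2 (not_le.mpr h)),
        Set.indicator_of_mem (by exact h : u ∈ Ioi 1), zero_add]
      have habs : |u - w| = u - w := abs_of_nonneg (by linarith)
      have he : Real.exp (-|u - w|) ≤ Real.exp 1 * Real.exp (-u) := by
        rw [habs, ← Real.exp_add]
        exact Real.exp_le_exp.mpr (by linarith)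
      have hu1 : u ^ (H - 1) ≤ 1 :=
        Real.rpow_le_one_of_one_le_of_nonpos h.le (by linarith)
      nlinarith [Real.rpow_nonneg hu.1.le (H - 1), (Real.exp_pos (-|u - w|)).le,
        mul_nonneg (Real.exp_pos (1:ℝ)).le (Real.exp_pos (-u)).le]
  calc (∫ u in Set.Ioc (0:ℝ) T, Real.exp (-|u - w|) * u ^ (H - 1))
      ≤ ∫ u in Set.Ioc (0:ℝ) T,
          ((Ioc (0:ℝ) 1).indicator (fun u : ℝ => Real.exp 1 * u ^ (H - 1)) u
            + (Ioi (1:ℝ)).indicator (fun u : ℝ => Real.exp 1 * Real.exp (-u)) u) := by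
        refine integral_mono_of_nonneg ?_ ((hg1.add hg2).restrict) ?_
        · exact (ae_restrict_iff' measurableSet_Ioc).mpr (ae_of_all _ fun u hu =>
            mul_nonneg (Real.exp_pos _).le (Real.rpow_nonneg hu.1.le _))
        · exact (ae_restrict_iff' measurableSet_Ioc).mpr (ae_of_all _ key)
    _ ≤ ∫ u : ℝ,
          ((Ioc (0:ℝ) 1).indicator (fun u : ℝ => Real.exp 1 * u ^ (H - 1)) u
            + (Ioi (1:ℝ)).indicator (fun u : ℝ => Real.exp 1 * Real.exp (-u)) u) := by
        refine setIntegral_le_integral (hg1.add hg2) (ae_of_all _ fun u => ?_)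
        refine add_nonneg ?_ ?_
        · exact Set.indicator_nonneg (fun x hx =>
            mul_nonneg (Real.exp_pos _).le (Real.rpow_nonneg hx.1.le _)) u
        · exact Set.indicator_nonneg (fun x _ =>
            mul_nonneg (Real.exp_pos _).le (Real.exp_pos _).le) u
    _ = Real.exp 1 * ((1:ℝ) ^ (H - 1 + 1) / (H - 1 + 1)) + Real.exp 1 * Real.exp (-1) := by
        rw [integral_add hg1 hg2, integral_indicator measurableSet_Ioc,
          integral_indicator measurableSet_Ioi, integral_const_mul, integral_const_mul,
          aux_rpow_integral (by linarith) one_pos.le, integral_exp_neg_Ioi]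
    _ ≤ Real.exp 1 * (1/H + 1) := by
        rw [Real.one_rpow]
        have he1 : Real.exp (-1:ℝ) ≤ 1 := Real.exp_le_one_iff.mpr (by norm_num)
        have : H - 1 + 1 = H := by ring
        rw [this]
        have := (Real.exp_pos (1:ℝ)).le
        nlinarith [Real.exp_pos (1:ℝ)]

theorem stmt7 (H : ℝ) (hH : H ∈ Set.Ioo (0:ℝ) (1/3)) :
    ∃ C > (0:ℝ), ∀ T ≥ (1:ℝ),
      (∫ w in Set.Ioc (0:ℝ) T,
          (∫ u in Set.Ioc (0:ℝ) T, Real.exp (-|u - w|) * u ^ (H - 1)) *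
            ((T - w) ^ (2*H - 1) + w ^ (2*H - 1)))
        ≤ C := by
  obtain ⟨h0, h13⟩ := hH
  have h1 : H < 1 := by linarith
  have h3 : (0:ℝ) < 1 - 3*H := by linarith
  have hHinv : (0:ℝ) < 1/H := one_div_pos.mpr h0
  set A : ℝ := 2/H + 4 with hAdef
  set B : ℝ := Real.exp 1 * (1/H + 1) with hBdef
  have hApos : 0 < A := by
    have h2H : (0:ℝ) < 2/H := div_pos two_pos h0
    rw [hAdef]; linarith
  have hBpos : 0 < B := mul_pos (Real.exp_pos 1) (by linarith)
  refine ⟨2*A/H + A/H + B/(2*H) + A/(1-3*H) + 1, ?_, ?_⟩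
  · have t1 : (0:ℝ) < 2*A/H := div_pos (by linarith) h0
    have t2 : (0:ℝ) < A/H := div_pos hApos h0
    have t3 : (0:ℝ) < B/(2*H) := div_pos hBpos (by linarith)
    have t4 : (0:ℝ) < A/(1-3*H) := div_pos hApos h3
    linarith
  intro T hT
  have hT0 : (0:ℝ) < T := by linarith
  have hT2 : (0:ℝ) < T/2 := by linarith
  set F : ℝ → ℝ := fun w => ∫ u in Set.Ioc (0:ℝ) T, Real.exp (-|u - w|) * u ^ (H - 1) with hF
  have hFnn : ∀ w : ℝ, 0 ≤ F w := fun w =>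
    setIntegral_nonneg measurableSet_Ioc fun u hu =>
      mul_nonneg (Real.exp_pos _).le (Real.rpow_nonneg hu.1.le _)
  have hFA : ∀ w ∈ Ioc (0:ℝ) T, F w ≤ A * w ^ (H - 1) := fun w hw => psi_le_A h0 h1 hT hw
  have hFB : ∀ w ∈ Ioc (0:ℝ) 1, F w ≤ B := fun w hw => psi_le_B h0 h1 hT hw
  set g1 : ℝ → ℝ := (Ioc (0:ℝ) (T/2)).indicator (fun w => A * (T/2)^(2*H-1) * w^(H-1))
    with hg1def
  set g2 : ℝ → ℝ := (Ioc (T/2) T).indicator (fun w => A * (T/2)^(H-1) * (T-w)^(2*H-1))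
    with hg2def
  set g3 : ℝ → ℝ := (Ioc (0:ℝ) 1).indicator (fun w => B * w^(2*H-1)) with hg3def
  set g4 : ℝ → ℝ := (Ioc (1:ℝ) T).indicator (fun w => A * w^(3*H-2)) with hg4def
  have hig1 : Integrable g1 :=
    IntegrableOn.integrable_indicator
      ((aux_rpow_integrableOn (by linarith) hT2.le).const_mul _) measurableSet_Ioc
  have hioc2 : IntegrableOn (fun w : ℝ => (T - w)^(2*H-1)) (Ioc (T/2) T) := by
    have hii : IntervalIntegrable (fun x : ℝ => x ^ (2*H-1)) volume 0 (T/2) :=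
      intervalIntegral.intervalIntegrable_rpow' (by linarith)
    have h' := (hii.comp_sub_left T).symm
    rw [show T - 0 = T by ring, show T - T/2 = T/2 by ring] at h'
    rwa [intervalIntegrable_iff_integrableOn_Ioc_of_le (by linarith)] at h'
  have hig2 : Integrable g2 :=
    IntegrableOn.integrable_indicator (hioc2.const_mul _) measurableSet_Ioc
  have hig3 : Integrable g3 :=
    IntegrableOn.integrable_indicator
      ((aux_rpow_integrableOn (by linarith) one_pos.le).const_mul _) measurableSet_Ioc
  have hioc4 : IntegrableOn (fun w : ℝ => w ^ (3*H-2)) (Ioc (1:ℝ) T) := by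
    have hii : IntervalIntegrable (fun x : ℝ => x ^ (3*H-2)) volume 1 T :=
      intervalIntegral.intervalIntegrable_rpow (by
        right
        rw [Set.uIcc_of_le hT]
        intro hmem
        exact absurd hmem.1 (by norm_num))
    rwa [intervalIntegrable_iff_integrableOn_Ioc_of_le hT] at hii
  have hig4 : Integrable g4 :=
    IntegrableOn.integrable_indicator (hioc4.const_mul _) measurableSet_Ioc
  have key : ∀ w ∈ Ioc (0:ℝ) T,
      F w * ((T - w) ^ (2*H - 1) + w ^ (2*H - 1)) ≤ g1 w + g2 w + g3 w + g4 w := by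
    intro w hw
    obtain ⟨hw0, hwT⟩ := hw
    have hFAw := hFA w ⟨hw0, hwT⟩
    have hAwnn : (0:ℝ) ≤ A * w ^ (H-1) := mul_nonneg hApos.le (Real.rpow_nonneg hw0.le _)
    have part1 : F w * (T - w) ^ (2*H - 1) ≤ g1 w + g2 w := by
      rcases le_or_gt w (T/2) with h | h
      · rw [hg2def, Set.indicator_of_notMem (fun hmem => absurd hmem.1 (not_lt.mpr h)),
          hg1def, Set.indicator_of_mem (show w ∈ Ioc (0:ℝ) (T/2) from ⟨hw0, h⟩), add_zero]
        have hTw : (T-w)^(2*H-1) ≤ (T/2)^(2*H-1) :=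
          Real.rpow_le_rpow_of_nonpos hT2 (by linarith) (by linarith)
        calc F w * (T - w) ^ (2*H - 1) ≤ (A * w ^ (H-1)) * (T/2)^(2*H-1) :=
              mul_le_mul hFAw hTw (Real.rpow_nonneg (by linarith) _) hAwnn
          _ = A * (T/2)^(2*H-1) * w^(H-1) := by ring
      · rw [hg1def, Set.indicator_of_notMem (fun hmem => absurd hmem.2 (not_le.mpr h)),
          hg2def, Set.indicator_of_mem (show w ∈ Ioc (T/2) T from ⟨h, hwT⟩), zero_add]
        have hFw2 : F w ≤ A * (T/2)^(H-1) := by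
          refine hFAw.trans (mul_le_mul_of_nonneg_left ?_ hApos.le)
          exact Real.rpow_le_rpow_of_nonpos hT2 h.le (by linarith)
        exact mul_le_mul_of_nonneg_right hFw2 (Real.rpow_nonneg (by linarith) _)
    have part2 : F w * w ^ (2*H - 1) ≤ g3 w + g4 w := by
      rcases le_or_gt w 1 with h | h
      · rw [hg4def, Set.indicator_of_notMem (fun hmem => absurd hmem.1 (not_lt.mpr h)),
          hg3def, Set.indicator_of_mem (show w ∈ Ioc (0:ℝ) 1 from ⟨hw0, h⟩), add_zero]
        exact mul_le_mul_of_nonneg_right (hFB w ⟨hw0, h⟩) (Real.rpow_nonneg hw0.le _)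
      · rw [hg3def, Set.indicator_of_notMem (fun hmem => absurd hmem.2 (not_le.mpr h)),
          hg4def, Set.indicator_of_mem (show w ∈ Ioc (1:ℝ) T from ⟨h, hwT⟩), zero_add]
        have hrw : w ^ (H-1) * w ^ (2*H-1) = w ^ (3*H-2) := by
          rw [← Real.rpow_add hw0]
          congr 1
          ring
        calc F w * w ^ (2*H - 1) ≤ (A * w ^ (H-1)) * w ^ (2*H-1) :=
              mul_le_mul_of_nonneg_right hFAw (Real.rpow_nonneg hw0.le _)
          _ = A * (w ^ (H-1) * w ^ (2*H-1)) := by ring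
          _ = A * w ^ (3*H-2) := by rw [hrw]
    calc F w * ((T - w) ^ (2*H - 1) + w ^ (2*H - 1))
        = F w * (T - w) ^ (2*H - 1) + F w * w ^ (2*H - 1) := by ring
      _ ≤ (g1 w + g2 w) + (g3 w + g4 w) := add_le_add part1 part2
      _ = g1 w + g2 w + g3 w + g4 w := by ring
  have h32 : (T/2)^(3*H-1) ≤ 2 := by
    calc (T/2)^(3*H-1) ≤ ((1:ℝ)/2)^(3*H-1) :=
          Real.rpow_le_rpow_of_nonpos one_half_pos (by linarith) (by linarith)
      _ = 2 ^ (1-3*H) := by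
          rw [aux_half_rpow one_pos, Real.one_rpow, one_mul]
          congr 1
          ring
      _ ≤ 2 := aux_two_rpow_le (by linarith)
  have hrnn : (0:ℝ) ≤ (T/2)^(3*H-1) := Real.rpow_nonneg hT2.le _
  have hi1 : (∫ w : ℝ, g1 w) ≤ 2*A/H := by
    rw [hg1def, integral_indicator measurableSet_Ioc, integral_const_mul,
      aux_rpow_integral (by linarith) hT2.le, show H - 1 + 1 = H by ring]
    have hcomb : (T/2)^(2*H-1) * (T/2)^H = (T/2)^(3*H-1) := by
      rw [← Real.rpow_add hT2]; congr 1; ring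
    calc A * (T/2)^(2*H-1) * ((T/2)^H / H)
        = (A * ((T/2)^(2*H-1) * (T/2)^H)) / H := by ring
      _ = (A * (T/2)^(3*H-1)) / H := by rw [hcomb]
      _ ≤ (2*A) / H := by
          rw [div_le_div_iff₀ h0 h0]
          nlinarith [mul_le_mul_of_nonneg_left h32 (mul_pos hApos h0).le]
  have hint2 : (∫ w in Ioc (T/2) T, (T - w)^(2*H-1)) = (T/2)^(2*H) / (2*H) := by
    rw [← intervalIntegral.integral_of_le (by linarith : T/2 ≤ T),
      intervalIntegral.integral_comp_sub_left (fun x : ℝ => x ^ (2*H-1)) T,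
      show T - T = 0 by ring, show T - T/2 = T/2 by ring,
      integral_rpow (Or.inl (by linarith : (-1:ℝ) < 2*H-1)),
      show 2*H-1+1 = 2*H by ring,
      Real.zero_rpow (ne_of_gt (by linarith : (0:ℝ) < 2*H)), sub_zero]
  have hi2 : (∫ w : ℝ, g2 w) ≤ A/H := by
    rw [hg2def, integral_indicator measurableSet_Ioc, integral_const_mul, hint2]
    have hcomb : (T/2)^(H-1) * (T/2)^(2*H) = (T/2)^(3*H-1) := by
      rw [← Real.rpow_add hT2]; congr 1; ring
    calc A * (T/2)^(H-1) * ((T/2)^(2*H) / (2*H))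
        = (A * ((T/2)^(H-1) * (T/2)^(2*H))) / (2*H) := by ring
      _ = (A * (T/2)^(3*H-1)) / (2*H) := by rw [hcomb]
      _ ≤ (2*A) / (2*H) := by
          rw [div_le_div_iff₀ (by linarith) (by linarith : (0:ℝ) < 2*H)]
          nlinarith [mul_le_mul_of_nonneg_left h32 (mul_pos hApos h0).le]
      _ = A/H := mul_div_mul_left A H two_ne_zero
  have hi3 : (∫ w : ℝ, g3 w) ≤ B/(2*H) := by
    rw [hg3def, integral_indicator measurableSet_Ioc, integral_const_mul,
      aux_rpow_integral (by linarith) one_pos.le, show 2*H - 1 + 1 = 2*H by ring,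
      Real.one_rpow]
    exact le_of_eq (by ring)
  have hi4 : (∫ w : ℝ, g4 w) ≤ A/(1-3*H) := by
    rw [hg4def, integral_indicator measurableSet_Ioc, integral_const_mul]
    have hint4 : (∫ w in Ioc (1:ℝ) T, w ^ (3*H-2)) ≤ 1/(1-3*H) := by
      rw [← intervalIntegral.integral_of_le hT,
        integral_rpow (Or.inr ⟨(by linarith : 3*H-2 < -1).ne, by
          rw [Set.uIcc_of_le hT]
          intro hmem
          exact absurd hmem.1 (by norm_num)⟩),
        show 3*H-2+1 = 3*H-1 by ring, Real.one_rpow]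
      have hTp : T^(3*H-1) ≤ 1 := Real.rpow_le_one_of_one_le_of_nonpos hT (by linarith)
      have hTnn : (0:ℝ) ≤ T^(3*H-1) := Real.rpow_nonneg hT0.le _
      have heq : (T^(3*H-1) - 1)/(3*H-1) = (1 - T^(3*H-1))/(1-3*H) := by
        rw [div_eq_div_iff (by linarith : (3*H-1:ℝ) ≠ 0) (by linarith : (1-3*H:ℝ) ≠ 0)]
        ring
      rw [heq, div_le_div_iff₀ h3 h3]
      nlinarith
    calc A * (∫ w in Ioc (1:ℝ) T, w ^ (3*H-2)) ≤ A * (1/(1-3*H)) :=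
          mul_le_mul_of_nonneg_left hint4 hApos.le
      _ = A/(1-3*H) := by ring
  have s1 : (∫ w in Ioc (0:ℝ) T, g1 w) ≤ ∫ w : ℝ, g1 w :=
    setIntegral_le_integral hig1 (ae_of_all _ fun u => Set.indicator_nonneg
      (fun x hx => mul_nonneg (mul_nonneg hApos.le (Real.rpow_nonneg hT2.le _))
        (Real.rpow_nonneg hx.1.le _)) u)
  have s2 : (∫ w in Ioc (0:ℝ) T, g2 w) ≤ ∫ w : ℝ, g2 w :=
    setIntegral_le_integral hig2 (ae_of_all _ fun u => Set.indicator_nonneg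
      (fun x hx => mul_nonneg (mul_nonneg hApos.le (Real.rpow_nonneg hT2.le _))
        (Real.rpow_nonneg (by linarith [hx.2]) _)) u)
  have s3 : (∫ w in Ioc (0:ℝ) T, g3 w) ≤ ∫ w : ℝ, g3 w :=
    setIntegral_le_integral hig3 (ae_of_all _ fun u => Set.indicator_nonneg
      (fun x hx => mul_nonneg hBpos.le (Real.rpow_nonneg hx.1.le _)) u)
  have s4 : (∫ w in Ioc (0:ℝ) T, g4 w) ≤ ∫ w : ℝ, g4 w :=
    setIntegral_le_integral hig4 (ae_of_all _ fun u => Set.indicator_nonneg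
      (fun x hx => mul_nonneg hApos.le (Real.rpow_nonneg (by linarith [hx.1]) _)) u)
  have step1 : (∫ w in Set.Ioc (0:ℝ) T, F w * ((T - w) ^ (2*H - 1) + w ^ (2*H - 1)))
      ≤ ∫ w in Set.Ioc (0:ℝ) T, (g1 w + g2 w + g3 w + g4 w) := by
    refine integral_mono_of_nonneg ?_ ((((hig1.add hig2).add hig3).add hig4).restrict) ?_
    · refine (ae_restrict_iff' measurableSet_Ioc).mpr (ae_of_all _ fun w hw => ?_)
      exact mul_nonneg (hFnn w) (add_nonneg (Real.rpow_nonneg (by linarith [hw.2]) _)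
        (Real.rpow_nonneg hw.1.le _))
    · exact (ae_restrict_iff' measurableSet_Ioc).mpr (ae_of_all _ key)
  have step2 : (∫ w in Set.Ioc (0:ℝ) T, (g1 w + g2 w + g3 w + g4 w))
      = (∫ w in Ioc (0:ℝ) T, g1 w) + (∫ w in Ioc (0:ℝ) T, g2 w)
        + (∫ w in Ioc (0:ℝ) T, g3 w) + (∫ w in Ioc (0:ℝ) T, g4 w) := by
    have i12 : Integrable (fun w : ℝ => g1 w + g2 w) := hig1.add hig2
    have i123 : Integrable (fun w : ℝ => g1 w + g2 w + g3 w) := i12.add hig3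
    rw [integral_add i123.restrict hig4.restrict, integral_add i12.restrict hig3.restrict,
      integral_add hig1.restrict hig2.restrict]
  calc (∫ w in Set.Ioc (0:ℝ) T, F w * ((T - w) ^ (2*H - 1) + w ^ (2*H - 1)))
      ≤ ∫ w in Set.Ioc (0:ℝ) T, (g1 w + g2 w + g3 w + g4 w) := step1
    _ = (∫ w in Ioc (0:ℝ) T, g1 w) + (∫ w in Ioc (0:ℝ) T, g2 w)
        + (∫ w in Ioc (0:ℝ) T, g3 w) + (∫ w in Ioc (0:ℝ) T, g4 w) := step2
    _ ≤ 2*A/H + A/H + B/(2*H) + A/(1-3*H) + 1 := by linarith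
end

section
/- Let H ∈ (0,1/2) and define φ(v,T) = ∫₀ᵀ∫₀ᵀ e^{-|u-w|} u^{H-1} |∂R^B(v,w)/∂v| du dw where ∂R^B(v,w)/∂v = H(v^{2H-1} - sgn(v-w)|v-w|^{2H-1}). Then lim_{T→∞} φ(T,T)/T^{3H-1} = 2(B(2H,H)·H - 1), where B is the Beta function. -/
open MeasureTheory Real Set Filter

open scoped Topology

/-!
Substituting `u = T t`, `w = T s` and using that `∂R^B/∂v` is homogeneous of degree `2H - 1`
turns `φ(T, T) / T^(3H-1)` into `∫₀¹ G_T(s) |∂R^B(1, s)| ds`, where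
`G_T(s) = ∫₀¹ T e^{-T|s-t|} t^(H-1) dt`. The kernel `T e^{-T|x|}` has mass `2` and concentrates
at `0`, so `G_T(s) → 2 s^(H-1)` on `(0, 1)`. The bound `G_T(s) ≤ (2 + 1/H) (s/2)^(H-1)` and
`|∂R^B(1, s)| = H ((1-s)^(2H-1) - 1)` give a Beta-type integrable majorant, and dominated
convergence yields `2H ∫₀¹ s^(H-1) ((1-s)^(2H-1) - 1) ds = 2 (H B(2H, H) - 1)`.
-/

lemma integral_Ioc_zero_eq_mul_integral_comp_mul (f : ℝ → ℝ) {T : ℝ} (hT : 0 < T) :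
    ∫ x in Ioc 0 T, f x = T * ∫ s in Ioc 0 1, f (T * s) := by
  rw [← intervalIntegral.integral_of_le hT.le, ← intervalIntegral.integral_of_le zero_le_one,
    intervalIntegral.integral_comp_mul_left f hT.ne', mul_zero, mul_one, smul_eq_mul,
    mul_inv_cancel_left₀ hT.ne']

lemma integral_exp_neg_abs : ∫ x, exp (-|x|) = 2 := by
  rw [integral_comp_abs (f := fun x => exp (-x)), integral_exp_neg_Ioi_zero, mul_one]

lemma integral_mul_exp_neg_abs_mul_sub {T : ℝ} (hT : 0 < T) (s : ℝ) :
    ∫ t, T * exp (-|T * (s - t)|) = 2 := by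
  rw [integral_const_mul, integral_sub_left_eq_self (fun t => exp (-|T * t|)),
    Measure.integral_comp_mul_left (fun x => exp (-|x|)) T, integral_exp_neg_abs, smul_eq_mul,
    abs_inv, abs_of_pos hT, mul_inv_cancel_left₀ hT.ne']

lemma integrable_mul_exp_neg_abs_mul_sub {T : ℝ} (hT : 0 < T) (s : ℝ) :
    Integrable fun t => T * exp (-|T * (s - t)|) :=
  Integrable.of_integral_ne_zero (by rw [integral_mul_exp_neg_abs_mul_sub hT]; norm_num)

lemma tendsto_integral_mul_exp_neg_abs_mul_sub_mul {g : ℝ → ℝ} (hg : Integrable g) {s : ℝ}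
    (hgs : ContinuousAt g s) :
    Tendsto (fun T => ∫ t, T * exp (-|T * (s - t)|) * g t) atTop (𝓝 (2 * g s)) := by
  have hφ : ∫ x, exp (-|x|) / 2 = 1 := by rw [integral_div, integral_exp_neg_abs]; norm_num
  have hdecay : Tendsto (fun x : ℝ => ‖x‖ ^ Module.finrank ℝ ℝ * (exp (-|x|) / 2))
      (Bornology.cobounded ℝ) (𝓝 0) := by
    have := ((tendsto_pow_mul_exp_neg_atTop_nhds_zero 1).div_const 2).comp
      (tendsto_norm_cobounded_atTop (E := ℝ))
    simpa [Function.comp_def, mul_div_assoc] using this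
  have := (tendsto_integral_comp_smul_smul_of_integrable' (fun x => by positivity) hφ hdecay hg
    hgs).const_mul 2
  refine this.congr fun T => ?_
  rw [← integral_const_mul]
  congr 1 with t
  simp only [Module.finrank_self, pow_one, smul_eq_mul]
  ring

lemma integrableOn_Ioc_rpow {r : ℝ} (hr : -1 < r) (b : ℝ) :
    IntegrableOn (fun t : ℝ => t ^ r) (Ioc 0 b) :=
  (intervalIntegral.intervalIntegrable_rpow' hr).1

lemma integrableOn_rpow_mul_one_sub_rpow {a b : ℝ} (ha : -1 < a) (hb : -1 < b) :
    IntegrableOn (fun x : ℝ => x ^ a * (1 - x) ^ b) (Ioc 0 1) := by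
  have h := (Complex.betaIntegral_convergent (u := a + 1) (v := b + 1) (by simp; linarith)
    (by simp; linarith)).1.re
  simp only [add_sub_cancel_right] at h
  refine IntegrableOn.congr_fun h (fun x hx => ?_) measurableSet_Ioc
  rw [← Complex.ofReal_one, ← Complex.ofReal_sub, ← Complex.ofReal_cpow hx.1.le,
    ← Complex.ofReal_cpow (by linarith [hx.2]), ← Complex.ofReal_mul, RCLike.re_to_complex,
    Complex.ofReal_re]

lemma setIntegral_Ioc_rpow_mul_one_sub_rpow_comm (a b : ℝ) :
    ∫ x in Ioc (0 : ℝ) 1, x ^ a * (1 - x) ^ b =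
      ∫ x in Ioc (0 : ℝ) 1, x ^ b * (1 - x) ^ a := by
  have h := intervalIntegral.integral_comp_sub_left (fun x : ℝ => x ^ b * (1 - x) ^ a) (1 : ℝ)
    (a := 0) (b := 1)
  simp only [sub_sub_cancel, sub_self, sub_zero] at h
  rw [← intervalIntegral.integral_of_le zero_le_one,
    ← intervalIntegral.integral_of_le zero_le_one, ← h]
  exact intervalIntegral.integral_congr fun x _ => mul_comm _ _

lemma setIntegral_Ioc_rpow_sub_one {H : ℝ} (hH : 0 < H) :
    ∫ s in Ioc 0 1, s ^ (H - 1) = 1 / H := by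
  rw [← intervalIntegral.integral_of_le zero_le_one, integral_rpow (Or.inl (by linarith))]
  simp [zero_rpow hH.ne']

-- `G_T(s)` of the proof sketch above.
noncomputable def smoothedRpow (H T s : ℝ) : ℝ :=
  ∫ t in Ioc 0 1, T * exp (-|T * (s - t)|) * t ^ (H - 1)

lemma smoothedRpow_nonneg (H : ℝ) {T : ℝ} (hT : 0 ≤ T) (s : ℝ) : 0 ≤ smoothedRpow H T s :=
  setIntegral_nonneg measurableSet_Ioc fun t ht =>
    mul_nonneg (by positivity) (rpow_nonneg ht.1.le _)

lemma tendsto_smoothedRpow {H s : ℝ} (hH : 0 < H) (hs : s ∈ Ioo 0 1) :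
    Tendsto (fun T => smoothedRpow H T s) atTop (𝓝 (2 * s ^ (H - 1))) := by
  set g := (Ioc (0 : ℝ) 1).indicator fun t : ℝ => t ^ (H - 1)
  have hg : Integrable g :=
    (integrableOn_Ioc_rpow (by linarith) 1).integrable_indicator measurableSet_Ioc
  have hg_eq : ∀ t ∈ Ioo (0 : ℝ) 1, g t = t ^ (H - 1) := fun t ht =>
    indicator_of_mem (Ioo_subset_Ioc_self ht) _
  have hgs : ContinuousAt g s := by
    refine (continuousAt_rpow_const s (H - 1) (Or.inl hs.1.ne')).congr ?_
    filter_upwards [Ioo_mem_nhds hs.1 hs.2] with t ht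
    exact (hg_eq t ht).symm
  convert tendsto_integral_mul_exp_neg_abs_mul_sub_mul hg hgs using 2 with T
  · rw [smoothedRpow, ← integral_indicator measurableSet_Ioc]
    congr 1 with t
    simp only [g, indicator, mem_Ioc]
    split_ifs <;> simp
  · rw [hg_eq s hs]

lemma stronglyMeasurable_smoothedRpow (H T : ℝ) : StronglyMeasurable (smoothedRpow H T) := by
  unfold smoothedRpow
  exact StronglyMeasurable.integral_prod_right' (ν := volume.restrict (Ioc 0 1))
    (f := fun p : ℝ × ℝ => T * exp (-|T * (p.1 - p.2)|) * p.2 ^ (H - 1)) (by fun_prop)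

lemma integrableOn_smoothedRpow_integrand {H : ℝ} (hH : 0 < H) (T s b : ℝ) :
    IntegrableOn (fun t => T * exp (-|T * (s - t)|) * t ^ (H - 1)) (Ioc 0 b) := by
  refine (integrableOn_Ioc_rpow (by linarith) b).bdd_mul (c := |T|) (by fun_prop) ?_
  filter_upwards with t
  rw [norm_mul, norm_eq_abs, norm_of_nonneg (exp_pos _).le]
  exact mul_le_of_le_one_right (abs_nonneg T) (exp_le_one_iff.2 (neg_nonpos.2 (abs_nonneg _)))

section SmoothedRpowBound

variable {H T s : ℝ}

lemma setIntegral_Ioc_half_smoothedRpow_integrand_le (hH : H ≤ 1) (hT : 0 < T) (hs : 0 < s) :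
    ∫ t in Ioc (s / 2) 1, T * exp (-|T * (s - t)|) * t ^ (H - 1) ≤ 2 * (s / 2) ^ (H - 1) := by
  have hk := integrable_mul_exp_neg_abs_mul_sub hT s
  calc ∫ t in Ioc (s / 2) 1, T * exp (-|T * (s - t)|) * t ^ (H - 1)
      ≤ ∫ t in Ioc (s / 2) 1, T * exp (-|T * (s - t)|) * (s / 2) ^ (H - 1) := by
        refine setIntegral_mono_on ?_ (hk.mul_const _).integrableOn measurableSet_Ioc
          fun t ht => ?_
        · refine (ContinuousOn.integrableOn_Icc ?_).mono_set Ioc_subset_Icc_self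
          exact ContinuousOn.mul (by fun_prop) (continuousOn_id.rpow_const fun t ht =>
            Or.inl (by linarith [ht.1] : t ≠ 0))
        · exact mul_le_mul_of_nonneg_left
            (rpow_le_rpow_of_nonpos (by positivity) ht.1.le (by linarith)) (by positivity)
    _ = (∫ t in Ioc (s / 2) 1, T * exp (-|T * (s - t)|)) * (s / 2) ^ (H - 1) :=
        integral_mul_const _ _
    _ ≤ (∫ t, T * exp (-|T * (s - t)|)) * (s / 2) ^ (H - 1) :=
        mul_le_mul_of_nonneg_right
          (setIntegral_le_integral hk (.of_forall fun t => by positivity)) (by positivity)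
    _ = 2 * (s / 2) ^ (H - 1) := by rw [integral_mul_exp_neg_abs_mul_sub hT]

lemma setIntegral_Ioc_zero_half_smoothedRpow_integrand_le (hH : 0 < H) (hT : 0 < T)
    (hs : 0 < s) :
    ∫ t in Ioc 0 (s / 2), T * exp (-|T * (s - t)|) * t ^ (H - 1) ≤ (s / 2) ^ (H - 1) / H := by
  have hdecay : T * exp (-(T * (s / 2))) ≤ (s / 2)⁻¹ := by
    calc T * exp (-(T * (s / 2))) = (s / 2)⁻¹ * (T * (s / 2) * exp (-(T * (s / 2)))) := by
          field_simp
      _ ≤ (s / 2)⁻¹ * 1 := by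
          gcongr
          exact (mul_exp_neg_le_exp_neg_one _).trans (exp_le_one_iff.2 (by norm_num))
      _ = (s / 2)⁻¹ := mul_one _
  calc ∫ t in Ioc 0 (s / 2), T * exp (-|T * (s - t)|) * t ^ (H - 1)
      ≤ ∫ t in Ioc 0 (s / 2), T * exp (-(T * (s / 2))) * t ^ (H - 1) := by
        refine setIntegral_mono_on (integrableOn_smoothedRpow_integrand hH T s _)
          ((integrableOn_Ioc_rpow (by linarith) _).const_mul _) measurableSet_Ioc fun t ht => ?_
        refine mul_le_mul_of_nonneg_right ?_ (rpow_nonneg ht.1.le _)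
        gcongr
        rw [abs_mul, abs_of_pos hT]
        gcongr
        rw [abs_of_pos (by linarith [ht.2])]
        linarith [ht.2]
    _ = T * exp (-(T * (s / 2))) * ((s / 2) ^ H / H) := by
        rw [integral_const_mul, ← intervalIntegral.integral_of_le (by positivity),
          integral_rpow (Or.inl (by linarith))]
        simp [zero_rpow hH.ne']
    _ ≤ (s / 2)⁻¹ * ((s / 2) ^ H / H) := by gcongr
    _ = (s / 2) ^ (H - 1) / H := by
        rw [rpow_sub_one (by positivity)]
        ring

lemma smoothedRpow_le (hH : 0 < H) (hH1 : H ≤ 1) (hT : 0 < T) (hs : s ∈ Ioo 0 1) :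
    smoothedRpow H T s ≤ (2 + 1 / H) * (s / 2) ^ (H - 1) := by
  have hf := integrableOn_smoothedRpow_integrand hH T s 1
  rw [smoothedRpow, ← Ioc_union_Ioc_eq_Ioc (by linarith [hs.1] : 0 ≤ s / 2)
      (by linarith [hs.2] : s / 2 ≤ 1),
    setIntegral_union (Ioc_disjoint_Ioc_of_le le_rfl) measurableSet_Ioc
      (hf.mono_set (Ioc_subset_Ioc le_rfl (by linarith [hs.2])))
      (hf.mono_set (Ioc_subset_Ioc (by linarith [hs.1]) le_rfl))]
  have hsum : (2 + 1 / H) * (s / 2) ^ (H - 1) =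
      (s / 2) ^ (H - 1) / H + 2 * (s / 2) ^ (H - 1) := by
    ring
  linarith [setIntegral_Ioc_zero_half_smoothedRpow_integrand_le hH hT hs.1,
    setIntegral_Ioc_half_smoothedRpow_integrand_le hH1 hT hs.1]

end SmoothedRpowBound

lemma sign_mul_of_pos {T : ℝ} (hT : 0 < T) (x : ℝ) : Real.sign (T * x) = Real.sign x := by
  rcases lt_trichotomy x 0 with hx | rfl | hx
  · rw [Real.sign_of_neg hx, Real.sign_of_neg (mul_neg_of_pos_of_neg hT hx)]
  · rw [mul_zero]
  · rw [Real.sign_of_pos hx, Real.sign_of_pos (mul_pos hT hx)]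

-- `∂R^B(v, w)/∂v` for the fBm covariance `R^B`.
noncomputable def fbmCovDeriv (H v w : ℝ) : ℝ :=
  H * (v ^ (2 * H - 1) - Real.sign (v - w) * |v - w| ^ (2 * H - 1))

lemma fbmCovDeriv_mul_mul (H : ℝ) {T v : ℝ} (hT : 0 < T) (hv : 0 ≤ v) (w : ℝ) :
    fbmCovDeriv H (T * v) (T * w) = T ^ (2 * H - 1) * fbmCovDeriv H v w := by
  rw [fbmCovDeriv, fbmCovDeriv, ← mul_sub, sign_mul_of_pos hT, abs_mul,
    abs_of_pos hT, mul_rpow hT.le hv, mul_rpow hT.le (abs_nonneg _)]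
  ring

lemma abs_fbmCovDeriv_one {H s : ℝ} (hH : 0 ≤ H) (hH2 : H ≤ 1 / 2) (hs : s ∈ Ioo 0 1) :
    |fbmCovDeriv H 1 s| = H * ((1 - s) ^ (2 * H - 1) - 1) := by
  have hs1 : 0 < 1 - s := by linarith [hs.2]
  have hpow : 1 ≤ (1 - s) ^ (2 * H - 1) :=
    one_le_rpow_of_pos_of_le_one_of_nonpos hs1 (by linarith [hs.1]) (by linarith)
  rw [fbmCovDeriv, one_rpow, Real.sign_of_pos hs1, abs_of_pos hs1, one_mul, abs_mul,
    abs_of_nonneg hH, abs_of_nonpos (by linarith), neg_sub]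

lemma setIntegral_Ioc_exp_neg_abs_sub_mul_rpow (H : ℝ) {T : ℝ} (hT : 0 < T) (s : ℝ) :
    ∫ u in Ioc 0 T, exp (-|u - T * s|) * u ^ (H - 1) = T ^ (H - 1) * smoothedRpow H T s := by
  rw [integral_Ioc_zero_eq_mul_integral_comp_mul _ hT, smoothedRpow, ← integral_const_mul,
    ← integral_const_mul]
  refine setIntegral_congr_fun measurableSet_Ioc fun t ht => ?_
  rw [← mul_sub, ← neg_sub s t, mul_neg, abs_neg, mul_rpow hT.le ht.1.le]
  ring

lemma setIntegral_Ioc_div_rpow_eq_setIntegral_smoothedRpow (H : ℝ) {T : ℝ} (hT : 0 < T) :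
    (∫ w in Ioc 0 T, ∫ u in Ioc 0 T, exp (-|u - w|) * u ^ (H - 1) * |fbmCovDeriv H T w|) /
        T ^ (3 * H - 1) =
      ∫ s in Ioc 0 1, smoothedRpow H T s * |fbmCovDeriv H 1 s| := by
  have hD (s : ℝ) : |fbmCovDeriv H T (T * s)| = T ^ (2 * H - 1) * |fbmCovDeriv H 1 s| := by
    rw [← abs_of_pos (rpow_pos_of_pos hT (2 * H - 1)), ← abs_mul,
      ← fbmCovDeriv_mul_mul H hT zero_le_one, mul_one]
  have hpow : T * (T ^ (H - 1) * T ^ (2 * H - 1)) = T ^ (3 * H - 1) := by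
    rw [← rpow_add hT, mul_comm, ← rpow_add_one hT.ne']
    ring_nf
  simp_rw [integral_mul_const]
  rw [integral_Ioc_zero_eq_mul_integral_comp_mul _ hT]
  simp_rw [setIntegral_Ioc_exp_neg_abs_sub_mul_rpow H hT, hD]
  rw [div_eq_iff (rpow_pos_of_pos hT _).ne', ← hpow, ← integral_mul_const,
    ← integral_const_mul]
  exact integral_congr_ae (.of_forall fun s => by ring)

section FbmLimit

variable {H : ℝ}

lemma tendsto_setIntegral_smoothedRpow_mul_abs_fbmCovDeriv (hH : 0 < H) (hH2 : H ≤ 1 / 2) :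
    Tendsto (fun T => ∫ s in Ioo 0 1, smoothedRpow H T s * |fbmCovDeriv H 1 s|) atTop
      (𝓝 (∫ s in Ioo 0 1, 2 * s ^ (H - 1) * |fbmCovDeriv H 1 s|)) := by
  have hbound : IntegrableOn
      (fun s => (2 + 1 / H) * (s / 2) ^ (H - 1) * (H * (1 - s) ^ (2 * H - 1))) (Ioo 0 1) := by
    refine IntegrableOn.congr_fun (((integrableOn_rpow_mul_one_sub_rpow (a := H - 1)
      (b := 2 * H - 1) (by linarith) (by linarith)).mono_set Ioo_subset_Ioc_self).const_mul
      ((2 + 1 / H) * H / 2 ^ (H - 1))) (fun s hs => ?_) measurableSet_Ioo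
    rw [div_rpow hs.1.le zero_le_two]
    ring
  refine tendsto_integral_filter_of_dominated_convergence _ ?_ ?_ hbound ?_
  · have hD : AEStronglyMeasurable (fun s => |fbmCovDeriv H 1 s|) (volume.restrict (Ioo 0 1)) :=
      (by fun_prop : Measurable fun s : ℝ => H * ((1 - s) ^ (2 * H - 1) - 1)).aestronglyMeasurable
        |>.congr (ae_restrict_of_forall_mem measurableSet_Ioo fun s hs =>
          (abs_fbmCovDeriv_one hH.le hH2 hs).symm)
    exact .of_forall fun T => (stronglyMeasurable_smoothedRpow H T).aestronglyMeasurable.mul hD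
  · filter_upwards [eventually_gt_atTop 0] with T hT
    filter_upwards [ae_restrict_mem measurableSet_Ioo] with s hs
    have hD := abs_fbmCovDeriv_one hH.le hH2 hs
    rw [norm_of_nonneg (mul_nonneg (smoothedRpow_nonneg H hT.le s) (abs_nonneg _))]
    refine mul_le_mul (smoothedRpow_le hH (by linarith) hT hs) (by linarith) (abs_nonneg _) ?_
    exact mul_nonneg (by positivity) (rpow_nonneg (by linarith [hs.1]) _)
  · filter_upwards [ae_restrict_mem measurableSet_Ioo] with s hs
    exact (tendsto_smoothedRpow hH hs).mul_const _

lemma setIntegral_Ioo_two_rpow_mul_abs_fbmCovDeriv (hH : 0 < H) (hH2 : H ≤ 1 / 2) :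
    ∫ s in Ioo 0 1, 2 * s ^ (H - 1) * |fbmCovDeriv H 1 s| =
      2 * ((∫ x in Ioc 0 1, x ^ (2 * H - 1) * (1 - x) ^ (H - 1)) * H - 1) := by
  rw [setIntegral_congr_fun measurableSet_Ioo (g := fun s =>
      2 * H * (s ^ (H - 1) * (1 - s) ^ (2 * H - 1)) - 2 * H * s ^ (H - 1))
      fun s hs => by rw [abs_fbmCovDeriv_one hH.le hH2 hs]; ring,
    integral_sub, integral_const_mul, integral_const_mul, ← integral_Ioc_eq_integral_Ioo,
    ← integral_Ioc_eq_integral_Ioo, setIntegral_Ioc_rpow_mul_one_sub_rpow_comm,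
    setIntegral_Ioc_rpow_sub_one hH]
  · field_simp
  · exact ((integrableOn_rpow_mul_one_sub_rpow (by linarith) (by linarith)).mono_set
      Ioo_subset_Ioc_self).const_mul _
  · exact ((integrableOn_Ioc_rpow (by linarith) 1).mono_set Ioo_subset_Ioc_self).const_mul _

end FbmLimit

theorem stmt8 (H : ℝ) (hH : H ∈ Set.Ioo (0:ℝ) (1/2)) :
    Filter.Tendsto
      (fun T : ℝ =>
        (∫ w in Set.Ioc (0:ℝ) T, ∫ u in Set.Ioc (0:ℝ) T,
            Real.exp (-|u - w|) * u ^ (H - 1) *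
              |H * (T ^ (2*H - 1) - Real.sign (T - w) * |T - w| ^ (2*H - 1))|)
          / T ^ (3*H - 1))
      Filter.atTop
      (nhds (2 * ((∫ x in Set.Ioc (0:ℝ) 1, x ^ (2*H - 1) * (1 - x) ^ (H - 1)) * H - 1))) := by
  obtain ⟨hH0, hH2⟩ := hH
  have hlim := tendsto_setIntegral_smoothedRpow_mul_abs_fbmCovDeriv hH0 hH2.le
  rw [setIntegral_Ioo_two_rpow_mul_abs_fbmCovDeriv hH0 hH2.le] at hlim
  refine hlim.congr' ?_
  filter_upwards [eventually_gt_atTop 0] with T hT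
  rw [← integral_Ioc_eq_integral_Ioo,
    ← setIntegral_Ioc_div_rpow_eq_setIntegral_smoothedRpow H hT]
  rfl
end

section
/- Let H ∈ (0,1/2). Then lim_{T→∞} (1/(e^{-T} T^{3H-1})) ∫₀ᵀ e^{-u} u^{H-1} (∫_{T-u}^{T} e^{-a} a^{2H-1} da) du = B(2H,H). -/
/-!
Substituting `u = T (1 - x)` and `a = T x + r` turns the numerator into
`e^{-T} T^{p+q+1} ∫₀¹ (1 - x)^p ∫₀^{T(1-x)} e^{-r} (x + r/T)^q dr dx`.
For `q ≤ 0` the integrand is dominated by `x^q (1 - x)^p e^{-r}`, which is integrable on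
`(0,1) × (0,∞)` when `p, q > -1`, and it converges pointwise to it as `T → ∞`; dominated
convergence gives the limit `B(q + 1, p + 1)`, since `∫₀^∞ e^{-r} dr = 1`.
-/

open MeasureTheory Real Set Filter Topology

theorem integrableOn_rpow_mul_one_sub_rpow_s10 {p q : ℝ} (hp : -1 < p) (hq : -1 < q) :
    IntegrableOn (fun x : ℝ => x ^ p * (1 - x) ^ q) (Ioo 0 1) := by
  have hbeta := (Complex.betaIntegral_convergent (u := p + 1) (v := q + 1)
    (by simp; linarith) (by simp; linarith)).norm
  rw [intervalIntegrable_iff_integrableOn_Ioo_of_le zero_le_one] at hbeta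
  refine hbeta.congr_fun (fun x hx => ?_) measurableSet_Ioo
  have h1x : 0 < 1 - x := sub_pos.2 hx.2
  simp only [norm_mul]
  rw [← Complex.ofReal_one, ← Complex.ofReal_sub, Complex.norm_cpow_eq_rpow_re_of_pos hx.1,
    Complex.norm_cpow_eq_rpow_re_of_pos h1x]
  simp

noncomputable def rescaledIntegrand (p q T : ℝ) (z : ℝ × ℝ) : ℝ :=
  if z.2 ≤ T * (1 - z.1) then (1 - z.1) ^ p * (exp (-z.2) * (z.1 + z.2 / T) ^ q) else 0

local notation "ρ" =>
  Measure.prod (Measure.restrict volume (Ioo (0:ℝ) 1)) (Measure.restrict volume (Ioi (0:ℝ)))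

theorem measurable_rescaledIntegrand (p q T : ℝ) : Measurable (rescaledIntegrand p q T) :=
  Measurable.ite (measurableSet_le measurable_snd (by fun_prop)) (by fun_prop) measurable_const

theorem integral_Ioi_rescaledIntegrand (p q T x : ℝ) :
    ∫ r in Ioi 0, rescaledIntegrand p q T (x, r)
      = (1 - x) ^ p * ∫ r in Ioc 0 (T * (1 - x)), exp (-r) * (x + r / T) ^ q := by
  have hslice : (fun r => rescaledIntegrand p q T (x, r))
      = (Iic (T * (1 - x))).indicator fun r => (1 - x) ^ p * (exp (-r) * (x + r / T) ^ q) := by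
    ext r; simp [rescaledIntegrand, indicator]
  rw [hslice, integral_indicator measurableSet_Iic, Measure.restrict_restrict measurableSet_Iic,
    Iic_inter_Ioi, integral_const_mul]

theorem integral_Ioc_exp_mul_rpow_eq {T x : ℝ} (q : ℝ) (hT : 0 < T) (hx0 : 0 ≤ x) (hx1 : x ≤ 1) :
    ∫ a in Ioc (T * x) T, exp (-a) * a ^ q
      = exp (-(T * x)) * T ^ q * ∫ r in Ioc 0 (T * (1 - x)), exp (-r) * (x + r / T) ^ q := by
  have hlen : 0 ≤ T * (1 - x) := mul_nonneg hT.le (sub_nonneg.2 hx1)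
  have hshift := intervalIntegral.integral_comp_add_left (a := 0) (b := T * (1 - x))
    (fun a => exp (-a) * a ^ q) (T * x)
  rw [add_zero, show T * x + T * (1 - x) = T by ring] at hshift
  rw [← intervalIntegral.integral_of_le (by nlinarith), ← hshift,
    ← intervalIntegral.integral_of_le hlen, ← intervalIntegral.integral_const_mul]
  refine intervalIntegral.integral_congr fun r hr => ?_
  rw [uIcc_of_le hlen] at hr
  have hpos : 0 ≤ x + r / T := add_nonneg hx0 (div_nonneg hr.1 hT.le)
  rw [neg_add, exp_add, show T * x + r = T * (x + r / T) by field_simp, mul_rpow hT.le hpos]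
  ring

theorem integral_exp_mul_rpow_eq_integral_rescaled {p q T : ℝ} (hT : 0 < T)
    (hint : Integrable (rescaledIntegrand p q T) ρ) :
    ∫ u in Ioc 0 T, exp (-u) * u ^ p * ∫ a in Ioc (T - u) T, exp (-a) * a ^ q
      = exp (-T) * T ^ (p + q + 1) * ∫ z, rescaledIntegrand p q T z ∂ρ := by
  have hsub := intervalIntegral.mul_integral_comp_sub_mul (a := 0) (b := 1)
    (f := fun u => exp (-u) * u ^ p * ∫ a in Ioc (T - u) T, exp (-a) * a ^ q) (c := T) (d := T)
  rw [mul_one, mul_zero, sub_self, sub_zero] at hsub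
  rw [← intervalIntegral.integral_of_le hT.le, ← hsub, intervalIntegral.integral_of_le zero_le_one,
    integral_Ioc_eq_integral_Ioo, integral_prod _ hint, ← integral_const_mul, ← integral_const_mul]
  refine setIntegral_congr_fun measurableSet_Ioo fun x hx => ?_
  have hexp : exp (-(T * (1 - x))) * exp (-(T * x)) = exp (-T) := by rw [← exp_add]; ring_nf
  rw [integral_Ioi_rescaledIntegrand, sub_sub_cancel,
    integral_Ioc_exp_mul_rpow_eq q hT hx.1.le hx.2.le, show T - T * x = T * (1 - x) by ring,
    mul_rpow hT.le (sub_pos.2 hx.2).le, rpow_add hT, rpow_add hT, rpow_one, ← hexp]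
  ring

theorem norm_rescaledIntegrand_le {p q T : ℝ} (hq : q ≤ 0) (hT : 0 < T) :
    ∀ᵐ z ∂ρ, ‖rescaledIntegrand p q T z‖ ≤ z.1 ^ q * (1 - z.1) ^ p * exp (-z.2) := by
  rw [Measure.prod_restrict]
  filter_upwards [ae_restrict_mem (measurableSet_Ioo.prod measurableSet_Ioi)]
    with z ⟨⟨hx0, hx1⟩, (hr : 0 < z.2)⟩
  have hx1' : 0 < 1 - z.1 := sub_pos.2 hx1
  unfold rescaledIntegrand
  split_ifs
  · have hmono : (z.1 + z.2 / T) ^ q ≤ z.1 ^ q :=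
      rpow_le_rpow_of_nonpos hx0 (le_add_of_nonneg_right (by positivity)) hq
    rw [norm_of_nonneg (by positivity)]
    calc (1 - z.1) ^ p * (exp (-z.2) * (z.1 + z.2 / T) ^ q)
        ≤ (1 - z.1) ^ p * (exp (-z.2) * z.1 ^ q) := by gcongr
      _ = z.1 ^ q * (1 - z.1) ^ p * exp (-z.2) := by ring
  · rw [norm_zero]
    positivity

theorem tendsto_rescaledIntegrand (p q : ℝ) :
    ∀ᵐ z ∂ρ, Tendsto (fun T => rescaledIntegrand p q T z) atTop
      (𝓝 (z.1 ^ q * (1 - z.1) ^ p * exp (-z.2))) := by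
  rw [Measure.prod_restrict]
  filter_upwards [ae_restrict_mem (measurableSet_Ioo.prod measurableSet_Ioi)]
    with z ⟨⟨hx0, hx1⟩, _⟩
  have hbase : Tendsto (fun T => z.1 + z.2 / T) atTop (𝓝 z.1) := by
    simpa using tendsto_const_nhds.add (tendsto_const_nhds.div_atTop (tendsto_id (α := ℝ)))
  have hlim := ((hbase.rpow_const (p := q) (Or.inl hx0.ne')).const_mul (exp (-z.2))).const_mul
    ((1 - z.1) ^ p)
  refine Tendsto.congr' ?_ (by convert hlim using 2; ring)
  filter_upwards [eventually_ge_atTop (z.2 / (1 - z.1))] with T hT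
  rw [rescaledIntegrand, if_pos ((div_le_iff₀ (sub_pos.2 hx1)).1 hT)]

theorem integrable_rpow_mul_one_sub_rpow_mul_exp_neg {p q : ℝ} (hp : -1 < p) (hq : -1 < q) :
    Integrable (fun z : ℝ × ℝ => z.1 ^ q * (1 - z.1) ^ p * exp (-z.2)) ρ :=
  (integrableOn_rpow_mul_one_sub_rpow_s10 hq hp).mul_prod
    (by simpa using exp_neg_integrableOn_Ioi 0 one_pos :
      IntegrableOn (fun r => exp (-r)) (Ioi 0))

theorem integral_rpow_mul_one_sub_rpow_mul_exp_neg (p q : ℝ) :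
    ∫ z, z.1 ^ q * (1 - z.1) ^ p * exp (-z.2) ∂ρ = ∫ x in Ioc 0 1, x ^ q * (1 - x) ^ p := by
  rw [integral_prod_mul (fun x => x ^ q * (1 - x) ^ p) (fun r => exp (-r)),
    integral_exp_neg_Ioi_zero, mul_one, integral_Ioc_eq_integral_Ioo]

theorem tendsto_integral_exp_mul_rpow_div {p q : ℝ} (hp : -1 < p) (hq : -1 < q) (hq0 : q ≤ 0) :
    Tendsto (fun T => (∫ u in Ioc 0 T, exp (-u) * u ^ p * ∫ a in Ioc (T - u) T, exp (-a) * a ^ q)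
        / (exp (-T) * T ^ (p + q + 1))) atTop (𝓝 (∫ x in Ioc 0 1, x ^ q * (1 - x) ^ p)) := by
  have hG := integrable_rpow_mul_one_sub_rpow_mul_exp_neg hp hq
  have hmeas (T : ℝ) : AEStronglyMeasurable (rescaledIntegrand p q T) ρ :=
    (measurable_rescaledIntegrand p q T).aestronglyMeasurable
  have hDCT := tendsto_integral_filter_of_dominated_convergence _ (.of_forall hmeas)
    ((eventually_gt_atTop 0).mono fun T hT => norm_rescaledIntegrand_le hq0 hT) hG
    (tendsto_rescaledIntegrand p q)
  rw [← integral_rpow_mul_one_sub_rpow_mul_exp_neg]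
  refine hDCT.congr' ?_
  filter_upwards [eventually_gt_atTop 0] with T hT
  rw [integral_exp_mul_rpow_eq_integral_rescaled hT
      (hG.mono' (hmeas T) (norm_rescaledIntegrand_le hq0 hT)),
    mul_div_cancel_left₀ _ (by positivity)]

theorem stmt10 (H : ℝ) (hH : H ∈ Set.Ioo (0:ℝ) (1/2)) :
    Filter.Tendsto
      (fun T : ℝ =>
        (∫ u in Set.Ioc (0:ℝ) T,
            Real.exp (-u) * u ^ (H - 1) *
              ∫ a in Set.Ioc (T - u) T, Real.exp (-a) * a ^ (2*H - 1))
          / (Real.exp (-T) * T ^ (3*H - 1)))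
      Filter.atTop
      (nhds (∫ x in Set.Ioc (0:ℝ) 1, x ^ (2*H - 1) * (1 - x) ^ (H - 1))) := by
  have h := tendsto_integral_exp_mul_rpow_div (p := H - 1) (q := 2 * H - 1)
    (by linarith [hH.1]) (by linarith [hH.1]) (by linarith [hH.2])
  rwa [show H - 1 + (2 * H - 1) + 1 = 3 * H - 1 by ring] at h
end

section
/- Let H ∈ (0,1/2). Then lim_{T→∞} (1/T^{5H-1}) ∫₀ᵀ b^{2H-1} (∫₀ᵇ a^{2H-1}(T-b+a)^{H-1} da) db = ∫₀¹ y^{2H-1} (∫₀ʸ x^{2H-1}(1-y+x)^{H-1} dx) dy. -/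
open MeasureTheory Real Set Filter

lemma scale_Ioc (T : ℝ) (hT : 0 < T) (c : ℝ) (f : ℝ → ℝ) :
    ∫ x in Set.Ioc (0:ℝ) (T*c), f x = T * ∫ x in Set.Ioc (0:ℝ) c, f (T*x) := by
  rcases le_or_gt 0 c with hc | hc
  · have h1 : (0:ℝ) ≤ T * c := mul_nonneg hT.le hc
    rw [← intervalIntegral.integral_of_le h1, ← intervalIntegral.integral_of_le hc,
      intervalIntegral.integral_comp_mul_left f hT.ne', mul_zero, smul_eq_mul,
      ← mul_assoc, mul_inv_cancel₀ hT.ne', one_mul]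
  · have h1 : T * c < 0 := mul_neg_of_pos_of_neg hT hc
    rw [Set.Ioc_eq_empty (by linarith), Set.Ioc_eq_empty (by linarith)]
    simp

lemma key (H : ℝ) (T : ℝ) (hT : 0 < T) :
    (1 / T ^ (5*H - 1)) *
        ∫ b in Set.Ioc (0:ℝ) T,
          b ^ (2*H - 1) *
            ∫ a in Set.Ioc (0:ℝ) b, a ^ (2*H - 1) * (T - b + a) ^ (H - 1)
    = ∫ y in Set.Ioc (0:ℝ) 1,
        y ^ (2*H - 1) * ∫ x in Set.Ioc (0:ℝ) y, x ^ (2*H - 1) * (1 - y + x) ^ (H - 1) := by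
  have houter : (∫ b in Set.Ioc (0:ℝ) T,
        b ^ (2*H - 1) * ∫ a in Set.Ioc (0:ℝ) b, a ^ (2*H - 1) * (T - b + a) ^ (H - 1))
      = T * ∫ y in Set.Ioc (0:ℝ) 1,
          (T*y) ^ (2*H - 1) * ∫ a in Set.Ioc (0:ℝ) (T*y), a ^ (2*H - 1) * (T - T*y + a) ^ (H - 1) := by
    have := scale_Ioc T hT 1
      (fun b => b ^ (2*H - 1) * ∫ a in Set.Ioc (0:ℝ) b, a ^ (2*H - 1) * (T - b + a) ^ (H - 1))
    simpa using this
  rw [houter]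
  have hcongr : ∀ y ∈ Set.Ioc (0:ℝ) 1,
      (T*y) ^ (2*H - 1) * ∫ a in Set.Ioc (0:ℝ) (T*y), a ^ (2*H - 1) * (T - T*y + a) ^ (H - 1)
      = T ^ (5*H - 2) *
          (y ^ (2*H - 1) * ∫ x in Set.Ioc (0:ℝ) y, x ^ (2*H - 1) * (1 - y + x) ^ (H - 1)) := by
    intro y hy
    rw [scale_Ioc T hT y (fun a => a ^ (2*H - 1) * (T - T*y + a) ^ (H - 1))]
    have hinner : (∫ x in Set.Ioc (0:ℝ) y, (T*x) ^ (2*H - 1) * (T - T*y + T*x) ^ (H - 1))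
        = T ^ (3*H - 2) * ∫ x in Set.Ioc (0:ℝ) y, x ^ (2*H - 1) * (1 - y + x) ^ (H - 1) := by
      rw [← MeasureTheory.integral_const_mul _ _]
      apply setIntegral_congr_fun measurableSet_Ioc
      intro x hx
      have hx0 : (0:ℝ) ≤ x := hx.1.le
      have h1 : (0:ℝ) ≤ 1 - y + x := by have := hy.2; linarith [hx.1]
      have he : T - T*y + T*x = T*(1 - y + x) := by ring
      simp only [he, Real.mul_rpow hT.le hx0, Real.mul_rpow hT.le h1]
      rw [show (3*H - 2) = (2*H - 1) + (H - 1) by ring, Real.rpow_add hT]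
      ring
    simp only [hinner, Real.mul_rpow hT.le hy.1.le]
    rw [show (5*H - 2) = (2*H - 1) + (1 + (3*H - 2)) by ring, Real.rpow_add hT,
      Real.rpow_add hT, Real.rpow_one]
    ring
  rw [setIntegral_congr_fun measurableSet_Ioc hcongr, MeasureTheory.integral_const_mul _ _]
  rw [show (5*H - 1) = 1 + (5*H - 2) by ring, Real.rpow_add hT, Real.rpow_one]
  have hp : (0:ℝ) < T ^ (5*H - 2) := Real.rpow_pos_of_pos hT _
  field_simp

theorem stmt11 (H : ℝ) (hH : H ∈ Set.Ioo (0:ℝ) (1/2)) :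
    Filter.Tendsto
      (fun T : ℝ =>
        (1 / T ^ (5*H - 1)) *
          ∫ b in Set.Ioc (0:ℝ) T,
            b ^ (2*H - 1) *
              ∫ a in Set.Ioc (0:ℝ) b, a ^ (2*H - 1) * (T - b + a) ^ (H - 1))
      Filter.atTop
      (nhds (∫ y in Set.Ioc (0:ℝ) 1,
        y ^ (2*H - 1) * ∫ x in Set.Ioc (0:ℝ) y, x ^ (2*H - 1) * (1 - y + x) ^ (H - 1))) := by
  have hev : (fun T : ℝ =>
        (1 / T ^ (5*H - 1)) *
          ∫ b in Set.Ioc (0:ℝ) T,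
            b ^ (2*H - 1) *
              ∫ a in Set.Ioc (0:ℝ) b, a ^ (2*H - 1) * (T - b + a) ^ (H - 1))
      =ᶠ[Filter.atTop] fun _ => ∫ y in Set.Ioc (0:ℝ) 1,
        y ^ (2*H - 1) * ∫ x in Set.Ioc (0:ℝ) y, x ^ (2*H - 1) * (1 - y + x) ^ (H - 1) := by
    filter_upwards [Filter.eventually_gt_atTop (0:ℝ)] with T hT
    exact key H T hT
  exact Filter.Tendsto.congr' hev.symm tendsto_const_nhds
end

section
/- Let H ∈ (0,1/2). For any 0 ≤ s < t, ∫∫_{s ≤ u₂ ≤ u₁ ≤ t} H((u₁-u₂)^{2H-1} + u₂^{2H-1}) du₁ du₂ ≤ (1/(2H+1))(t-s)^{2H+1}. -/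
open MeasureTheory Real Set Filter

lemma real_rpow_add_le_add_rpow {a b p : ℝ} (ha : 0 ≤ a) (hb : 0 ≤ b)
    (hp : 0 ≤ p) (hp1 : p ≤ 1) : (a + b) ^ p ≤ a ^ p + b ^ p := by
  have h := NNReal.rpow_add_le_add_rpow a.toNNReal b.toNNReal hp hp1
  rw [← NNReal.coe_le_coe] at h
  push_cast [Real.coe_toNNReal _ ha, Real.coe_toNNReal _ hb] at h
  exact h

theorem stmt14 (H : ℝ) (hH : H ∈ Set.Ioo (0:ℝ) (1/2)) :
    ∀ s t : ℝ, 0 ≤ s → s < t →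
      (∫ u₁ in Set.Ioc s t, ∫ u₂ in Set.Ioc s u₁,
          H * ((u₁ - u₂) ^ (2*H - 1) + u₂ ^ (2*H - 1)))
        ≤ (1 / (2*H + 1)) * (t - s) ^ (2*H + 1) := by
  obtain ⟨hH0, hH2⟩ := hH
  intro s t hs hst
  have hexp : (-1:ℝ) < 2*H - 1 := by linarith
  have h2H : (0:ℝ) < 2*H := by linarith
  -- evaluate the inner integral
  have hinner : ∀ u₁ ∈ Set.Ioc s t,
      (∫ u₂ in Set.Ioc s u₁, H * ((u₁ - u₂) ^ (2*H - 1) + u₂ ^ (2*H - 1)))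
        = (1/2) * ((u₁ - s) ^ (2*H) + u₁ ^ (2*H) - s ^ (2*H)) := by
    intro u₁ hu₁
    have hsu : s ≤ u₁ := hu₁.1.le
    rw [← intervalIntegral.integral_of_le hsu]
    have i0 : IntervalIntegrable (fun x : ℝ => x ^ (2*H - 1)) volume (u₁ - u₁) (u₁ - s) :=
      intervalIntegral.intervalIntegrable_rpow' hexp
    have i1 : IntervalIntegrable (fun u₂ : ℝ => (u₁ - u₂) ^ (2*H - 1)) volume s u₁ := by
      have := i0.comp_sub_left u₁
      simpa using this.symm
    have i2 : IntervalIntegrable (fun u₂ : ℝ => u₂ ^ (2*H - 1)) volume s u₁ :=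
      intervalIntegral.intervalIntegrable_rpow' hexp
    have e1 : (∫ u₂ in s..u₁, (u₁ - u₂) ^ (2*H - 1)) = (u₁ - s) ^ (2*H) / (2*H) := by
      rw [intervalIntegral.integral_comp_sub_left (fun x : ℝ => x ^ (2*H - 1)) u₁]
      rw [integral_rpow (Or.inl hexp)]
      rw [sub_self]
      rw [Real.zero_rpow (by linarith : 2*H - 1 + 1 ≠ 0)]
      ring_nf
    have e2 : (∫ u₂ in s..u₁, u₂ ^ (2*H - 1)) = (u₁ ^ (2*H) - s ^ (2*H)) / (2*H) := by
      rw [integral_rpow (Or.inl hexp)]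
      ring_nf
    have : (∫ u₂ in s..u₁, H * ((u₁ - u₂) ^ (2*H - 1) + u₂ ^ (2*H - 1)))
        = H * ((∫ u₂ in s..u₁, (u₁ - u₂) ^ (2*H - 1)) + ∫ u₂ in s..u₁, u₂ ^ (2*H - 1)) := by
      rw [intervalIntegral.integral_const_mul, intervalIntegral.integral_add i1 i2]
    rw [this, e1, e2]
    field_simp
    ring
  -- rewrite the outer integral
  rw [setIntegral_congr_fun measurableSet_Ioc hinner]
  -- pointwise bound of the evaluated inner integral
  have hbound : ∀ u₁ ∈ Set.Icc s t,
      (1/2) * ((u₁ - s) ^ (2*H) + u₁ ^ (2*H) - s ^ (2*H)) ≤ (u₁ - s) ^ (2*H) := by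
    intro u₁ hu₁
    have hsu : s ≤ u₁ := hu₁.1
    have key : u₁ ^ (2*H) ≤ (u₁ - s) ^ (2*H) + s ^ (2*H) := by
      have h := real_rpow_add_le_add_rpow (a := u₁ - s) (b := s)
        (by linarith) hs h2H.le (by linarith)
      simpa [sub_add_cancel] using h
    nlinarith [key]
  rw [← intervalIntegral.integral_of_le hst.le]
  have hcont : ∀ c : ℝ, IntervalIntegrable (fun u : ℝ => (u - c) ^ (2*H)) volume s t := by
    intro c
    have := (intervalIntegral.intervalIntegrable_rpow' (by linarith : (-1:ℝ) < 2*H)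
      (a := s - c) (b := t - c)).comp_sub_right c
    simpa using this
  have iA : IntervalIntegrable (fun u : ℝ => (1/2) * ((u - s) ^ (2*H) + u ^ (2*H) - s ^ (2*H)))
      volume s t := by
    have h1 := hcont s
    have h2 := hcont 0
    simp only [sub_zero] at h2
    have h3 : IntervalIntegrable (fun _ : ℝ => s ^ (2*H)) volume s t :=
      intervalIntegrable_const
    exact (((h1.add h2).sub h3).const_mul (1/2))
  have hmono := intervalIntegral.integral_mono_on hst.le iA (hcont s) hbound
  refine hmono.trans ?_
  have : (∫ u in s..t, (u - s) ^ (2*H)) = (t - s) ^ (2*H + 1) / (2*H + 1) := by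
    rw [intervalIntegral.integral_comp_sub_right (fun x : ℝ => x ^ (2*H)) s]
    rw [sub_self, integral_rpow (Or.inl (by linarith : (-1:ℝ) < 2*H))]
    rw [Real.zero_rpow (by linarith : 2*H + 1 ≠ 0)]
    ring
  rw [this]
  rw [div_eq_mul_inv, mul_comm, one_div]
end

section
/- Let H ∈ (0,1/2) and θ > 0. Then lim_{T→∞} ‖e^{-θ(T-·)}1_{[0,T]}(·)‖²_{𝔥₁} = HΓ(2H)θ^{-2H}, where ‖f‖²_{𝔥₁} = -∫₀ᵀ∫₀ᵀ f(t) (∂R^B(t,s)/∂t) dt ν_f(ds) for the fBm-associated Hilbert space; concretely for f(t) = e^{-θ(T-t)}1_{[0,T]}(t) this equals ∫₀ᵀ∫₀ᵀ θ e^{-θ(T-t)-θ(T-s)} H(t^{2H-1} - sgn(t-s)|t-s|^{2H-1}) dt ds plus boundary terms, and the limit as T → ∞ is HΓ(2H)θ^{-2H}. -/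
/-!
The factor `Real.sign (t - s) * |t - s| ^ (2H - 1)` is antisymmetric in `(t, s)` while the
exponential weight is symmetric, so it integrates to zero over the square and the double
integral factors as `A(T) * G(T)`, with `A(T) = ∫₀ᵀ e^{-θ(T-t)} t^{2H-1} dt` and
`G(T) = ∫₀ᵀ e^{-θu} du → 1/θ`. Reflecting `t ↦ T - t` turns the boundary term into
`A(T) + J(T)`, where `J(T) = ∫₀ᵀ e^{-θu} u^{2H-1} du → Γ(2H) θ^{-2H}` is a truncated Gamma
integral. Finally `A(T) → 0` because `2H - 1 < 0`: on `[0, T/2]` the weight is at most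
`e^{-θT/2}`, and on `[T/2, T]` the power is at most `(T/2)^{2H-1}`.
-/

open MeasureTheory Real Set Filter Topology

@[fun_prop]
lemma Real.measurable_sign : Measurable Real.sign :=
  Monotone.measurable fun x y hxy => by unfold Real.sign; split_ifs <;> linarith

lemma Real.abs_sign_le_one (x : ℝ) : |Real.sign x| ≤ 1 := by
  rcases Real.sign_apply_eq x with h | h | h <;> simp [h]

lemma intervalIntegrable_abs_rpow {p : ℝ} (hp : -1 < p) (a b : ℝ) :
    IntervalIntegrable (fun x => |x| ^ p) volume a b := by
  have from_zero_of_nonneg (c : ℝ) (hc : 0 ≤ c) :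
      IntervalIntegrable (fun x => |x| ^ p) volume 0 c := by
    refine (intervalIntegral.intervalIntegrable_rpow' hp).congr fun x hx => ?_
    rw [uIoc_of_le hc] at hx
    rw [abs_of_pos hx.1]
  have from_zero (c : ℝ) : IntervalIntegrable (fun x => |x| ^ p) volume 0 c := by
    rcases le_total 0 c with hc | hc
    · exact from_zero_of_nonneg c hc
    · simpa using (from_zero_of_nonneg (-c) (by linarith)).comp_sub_left 0
  exact (from_zero a).symm.trans (from_zero b)

lemma integrable_abs_sub_rpow_prod {p : ℝ} (hp : -1 < p) (a b : ℝ) :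
    Integrable (fun z : ℝ × ℝ => |z.1 - z.2| ^ p)
      ((volume.restrict (Ioc a b)).prod (volume.restrict (Ioc a b))) := by
  have hm : AEStronglyMeasurable (fun z : ℝ × ℝ => |z.1 - z.2| ^ p)
      ((volume.restrict (Ioc a b)).prod (volume.restrict (Ioc a b))) :=
    (by fun_prop : Measurable fun z : ℝ × ℝ => |z.1 - z.2| ^ p).aestronglyMeasurable
  have slice (t : ℝ) : IntegrableOn (fun s => |t - s| ^ p) (Ioc a b) := by
    have h := (intervalIntegrable_abs_rpow hp (t - a) (t - b)).comp_sub_left t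
    simp only [sub_sub_cancel] at h
    exact h.def'.mono_set Ioc_subset_uIoc
  have slice_le {t : ℝ} (ht : t ∈ Ioc a b) :
      ∫ s in Ioc a b, |t - s| ^ p ≤ ∫ u in Ioc (a - b) (b - a), |u| ^ p := by
    rw [← intervalIntegral.integral_of_le (ht.1.trans_le ht.2).le,
      intervalIntegral.integral_comp_sub_left (fun u => |u| ^ p),
      intervalIntegral.integral_of_le (by linarith [ht.1, ht.2])]
    refine setIntegral_mono_set ?_ (.of_forall fun u => by positivity) ?_
    · exact (intervalIntegrable_abs_rpow hp _ _).def'.mono_set Ioc_subset_uIoc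
    · exact (Ioc_subset_Ioc (by linarith [ht.1]) (by linarith [ht.2])).eventuallyLE
  rw [integrable_prod_iff hm]
  refine ⟨.of_forall slice, ?_⟩
  refine (integrable_const (∫ u in Ioc (a - b) (b - a), |u| ^ p)).mono'
    hm.norm.integral_prod_right' ?_
  filter_upwards [ae_restrict_mem measurableSet_Ioc] with t ht
  rw [Real.norm_of_nonneg (integral_nonneg fun s => norm_nonneg _)]
  simpa only [Real.norm_of_nonneg (rpow_nonneg (abs_nonneg _) _)] using slice_le ht

lemma integral_prod_eq_zero_of_antisymm {α : Type*} [MeasurableSpace α] {μ : Measure α}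
    [SFinite μ] {k : α × α → ℝ} (hk : ∀ z, k z.swap = -k z) : ∫ z, k z ∂μ.prod μ = 0 := by
  have h := integral_prod_swap (μ := μ) (ν := μ) k
  simp only [hk, integral_neg] at h
  linarith

lemma integral_integral_mul_sub_antisymm {α : Type*} [MeasurableSpace α] {μ : Measure α}
    [SFinite μ] {f g : α → ℝ} {k : α × α → ℝ} (hf : Integrable f μ) (hg : Integrable g μ)
    (hk : Integrable k (μ.prod μ)) (hk_anti : ∀ z, k z.swap = -k z) :
    ∫ x, ∫ y, (f x * g y - k (x, y)) ∂μ ∂μ = (∫ x, f x ∂μ) * ∫ y, g y ∂μ := by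
  rw [integral_integral ((hf.mul_prod hg).sub hk), integral_sub (hf.mul_prod hg) hk,
    integral_prod_eq_zero_of_antisymm hk_anti, sub_zero, integral_prod_mul]

lemma setIntegral_Ioc_comp_sub_left (f : ℝ → ℝ) {T : ℝ} (hT : 0 ≤ T) :
    ∫ t in Ioc 0 T, f (T - t) = ∫ u in Ioc 0 T, f u := by
  rw [← intervalIntegral.integral_of_le hT, intervalIntegral.integral_comp_sub_left,
    sub_self, sub_zero, intervalIntegral.integral_of_le hT]

lemma integrableOn_Ioc_exp_sub_mul_rpow {p θ T : ℝ} (hp : -1 < p) (hT : 0 ≤ T) :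
    IntegrableOn (fun t => exp (-θ * (T - t)) * t ^ p) (Ioc 0 T) := by
  rw [← intervalIntegrable_iff_integrableOn_Ioc_of_le hT]
  exact (intervalIntegral.intervalIntegrable_rpow' hp).continuousOn_mul (by fun_prop)

lemma integrable_exp_mul_sign_mul_abs_sub_rpow {p θ T : ℝ} (H : ℝ) (hp : -1 < p)
    (hθ : 0 < θ) :
    Integrable (fun z : ℝ × ℝ => exp (-θ * (T - z.1) - θ * (T - z.2)) *
        (H * (Real.sign (z.1 - z.2) * |z.1 - z.2| ^ p)))
      ((volume.restrict (Ioc 0 T)).prod (volume.restrict (Ioc 0 T))) := by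
  refine ((integrable_abs_sub_rpow_prod hp 0 T).const_mul |H|).mono'
    (by fun_prop : Measurable _).aestronglyMeasurable ?_
  rw [Measure.prod_restrict]
  filter_upwards [ae_restrict_mem (measurableSet_Ioc.prod measurableSet_Ioc)] with z ⟨h1, h2⟩
  have hexp : exp (-θ * (T - z.1) - θ * (T - z.2)) ≤ 1 :=
    exp_le_one_iff.mpr (by nlinarith [h1.2, h2.2])
  rw [norm_mul, norm_mul, norm_mul, norm_of_nonneg (exp_pos _).le,
    norm_of_nonneg (rpow_nonneg (abs_nonneg _) _), norm_eq_abs, norm_eq_abs]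
  calc exp (-θ * (T - z.1) - θ * (T - z.2)) *
        (|H| * (|Real.sign (z.1 - z.2)| * |z.1 - z.2| ^ p))
      ≤ 1 * (|H| * (1 * |z.1 - z.2| ^ p)) := by
        gcongr
        exact Real.abs_sign_le_one _
    _ = |H| * |z.1 - z.2| ^ p := by ring

lemma integral_integral_exp_mul_fbm_kernel {p θ T : ℝ} (H : ℝ) (hp : -1 < p) (hθ : 0 < θ)
    (hT : 0 ≤ T) :
    ∫ t in Ioc 0 T, ∫ s in Ioc 0 T, exp (-θ * (T - t) - θ * (T - s)) *
        (H * (t ^ p - Real.sign (t - s) * |t - s| ^ p))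
      = H * ((∫ t in Ioc 0 T, exp (-θ * (T - t)) * t ^ p) * ∫ u in Ioc 0 T, exp (-θ * u)) := by
  have hG : IntegrableOn (fun s => exp (-θ * (T - s))) (Ioc 0 T) :=
    (by fun_prop : Continuous fun s => exp (-θ * (T - s))).integrableOn_Ioc
  have key := integral_integral_mul_sub_antisymm
    ((integrableOn_Ioc_exp_sub_mul_rpow (θ := θ) hp hT).const_mul H) hG
    (integrable_exp_mul_sign_mul_abs_sub_rpow H hp hθ) fun z => by
      simp only [Prod.fst_swap, Prod.snd_swap]
      rw [← neg_sub z.1 z.2, Real.sign_neg, abs_neg]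
      ring_nf
  rw [integral_const_mul, setIntegral_Ioc_comp_sub_left (fun u => exp (-θ * u)) hT] at key
  rw [← mul_assoc, ← key]
  refine setIntegral_congr_fun measurableSet_Ioc fun t _ => ?_
  refine setIntegral_congr_fun measurableSet_Ioc fun s _ => ?_
  rw [show -θ * (T - t) - θ * (T - s) = -θ * (T - t) + -θ * (T - s) by ring, exp_add]
  ring

lemma integral_exp_mul_fbm_boundary {p θ T : ℝ} (H : ℝ) (hp : -1 < p) (hT : 0 ≤ T) :
    ∫ t in Ioc 0 T, exp (-θ * (T - t)) * (H * (t ^ p + (T - t) ^ p))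
      = H * ((∫ t in Ioc 0 T, exp (-θ * (T - t)) * t ^ p)
        + ∫ u in Ioc 0 T, exp (-θ * u) * u ^ p) := by
  have hJ : IntervalIntegrable (fun u => exp (-θ * u) * u ^ p) volume 0 T :=
    (intervalIntegral.intervalIntegrable_rpow' hp).continuousOn_mul (by fun_prop)
  have hJ_refl := (hJ.comp_sub_left T).symm
  rw [sub_self, sub_zero, intervalIntegrable_iff_integrableOn_Ioc_of_le hT] at hJ_refl
  rw [← setIntegral_Ioc_comp_sub_left (fun u => exp (-θ * u) * u ^ p) hT,
    ← integral_add (integrableOn_Ioc_exp_sub_mul_rpow hp hT) hJ_refl, ← integral_const_mul]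
  refine setIntegral_congr_fun measurableSet_Ioc fun t _ => ?_
  ring

lemma tendsto_setIntegral_Ioc_exp_neg_mul_rpow {a θ : ℝ} (ha : 0 < a) (hθ : 0 < θ) :
    Tendsto (fun T => ∫ u in Ioc 0 T, exp (-θ * u) * u ^ (a - 1)) atTop
      (𝓝 (Gamma a * θ ^ (-a))) := by
  have hint : IntegrableOn (fun u => u ^ (a - 1) * exp (-(θ * u))) (Ioi 0) := by
    simpa [neg_mul] using
      integrableOn_rpow_mul_exp_neg_mul_rpow (by linarith : -1 < a - 1) one_pos hθ
  have h := intervalIntegral_tendsto_integral_Ioi 0 hint tendsto_id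
  rw [integral_rpow_mul_exp_neg_mul_Ioi ha hθ, one_div, inv_rpow hθ.le, ← rpow_neg hθ.le,
    mul_comm] at h
  refine h.congr' ?_
  filter_upwards [eventually_ge_atTop 0] with T hT
  rw [id, intervalIntegral.integral_of_le hT]
  exact setIntegral_congr_fun measurableSet_Ioc fun u _ => by ring_nf

lemma setIntegral_Ioc_exp_neg_mul_le {θ : ℝ} (hθ : 0 < θ) (T : ℝ) :
    ∫ u in Ioc 0 T, exp (-θ * u) ≤ θ⁻¹ :=
  calc ∫ u in Ioc 0 T, exp (-θ * u) ≤ ∫ u in Ioi 0, exp (-θ * u) :=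
        setIntegral_mono_set (exp_neg_integrableOn_Ioi 0 hθ)
          (.of_forall fun _ => (exp_pos _).le) Ioc_subset_Ioi_self.eventuallyLE
    _ = θ⁻¹ := by rw [integral_exp_mul_Ioi (neg_lt_zero.mpr hθ)]; simp

lemma exp_sub_mul_rpow_le_add {a θ T t : ℝ} (ha : a ≤ 1) (hθ : 0 ≤ θ) (ht : t ∈ Ioc 0 T) :
    exp (-θ * (T - t)) * t ^ (a - 1)
      ≤ exp (-(θ / 2) * T) * t ^ (a - 1) + (T / 2) ^ (a - 1) * exp (-θ * (T - t)) := by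
  have hT : 0 < T / 2 := by linarith [ht.1, ht.2]
  have h1 : 0 ≤ exp (-(θ / 2) * T) * t ^ (a - 1) := by
    have := rpow_nonneg ht.1.le (a - 1); positivity
  have h2 : 0 ≤ (T / 2) ^ (a - 1) * exp (-θ * (T - t)) := by positivity
  rcases le_or_gt t (T / 2) with hle | hgt
  · have : exp (-θ * (T - t)) ≤ exp (-(θ / 2) * T) := exp_le_exp.mpr (by nlinarith)
    nlinarith [rpow_nonneg ht.1.le (a - 1)]
  · have : t ^ (a - 1) ≤ (T / 2) ^ (a - 1) := rpow_le_rpow_of_nonpos hT hgt.le (by linarith)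
    nlinarith [exp_pos (-θ * (T - t))]

lemma setIntegral_Ioc_rpow_sub_one_s19 {a T : ℝ} (ha : 0 < a) (hT : 0 ≤ T) :
    ∫ t in Ioc 0 T, t ^ (a - 1) = T ^ a / a := by
  rw [← intervalIntegral.integral_of_le hT, integral_rpow (Or.inl (by linarith)),
    sub_add_cancel, zero_rpow ha.ne', sub_zero]

lemma setIntegral_Ioc_exp_sub_mul_rpow_le {a θ T : ℝ} (ha0 : 0 < a) (ha1 : a ≤ 1)
    (hθ : 0 < θ) (hT : 0 ≤ T) :
    ∫ t in Ioc 0 T, exp (-θ * (T - t)) * t ^ (a - 1)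
      ≤ exp (-(θ / 2) * T) * (T ^ a / a) + (T / 2) ^ (a - 1) * θ⁻¹ := by
  have hpow : IntegrableOn (fun t => t ^ (a - 1)) (Ioc 0 T) := by
    rw [← intervalIntegrable_iff_integrableOn_Ioc_of_le hT]
    exact intervalIntegral.intervalIntegrable_rpow' (by linarith)
  have hexp : IntegrableOn (fun t => exp (-θ * (T - t))) (Ioc 0 T) :=
    (by fun_prop : Continuous fun t => exp (-θ * (T - t))).integrableOn_Ioc
  calc ∫ t in Ioc 0 T, exp (-θ * (T - t)) * t ^ (a - 1)
      ≤ ∫ t in Ioc 0 T,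
          (exp (-(θ / 2) * T) * t ^ (a - 1) + (T / 2) ^ (a - 1) * exp (-θ * (T - t))) :=
        setIntegral_mono_on (integrableOn_Ioc_exp_sub_mul_rpow (by linarith) hT)
          ((hpow.const_mul _).add (hexp.const_mul _)) measurableSet_Ioc
          fun t ht => exp_sub_mul_rpow_le_add ha1 hθ.le ht
    _ = exp (-(θ / 2) * T) * (T ^ a / a)
          + (T / 2) ^ (a - 1) * ∫ u in Ioc 0 T, exp (-θ * u) := by
        rw [integral_add (hpow.const_mul _) (hexp.const_mul _), integral_const_mul,
          integral_const_mul, setIntegral_Ioc_rpow_sub_one_s19 ha0 hT,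
          setIntegral_Ioc_comp_sub_left (fun u => exp (-θ * u)) hT]
    _ ≤ exp (-(θ / 2) * T) * (T ^ a / a) + (T / 2) ^ (a - 1) * θ⁻¹ := by
        gcongr
        exact setIntegral_Ioc_exp_neg_mul_le hθ T

lemma tendsto_setIntegral_Ioc_exp_sub_mul_rpow_zero {a θ : ℝ} (ha0 : 0 < a) (ha1 : a < 1)
    (hθ : 0 < θ) :
    Tendsto (fun T => ∫ t in Ioc 0 T, exp (-θ * (T - t)) * t ^ (a - 1)) atTop (𝓝 0) := by
  have h_origin : Tendsto (fun T => exp (-(θ / 2) * T) * (T ^ a / a)) atTop (𝓝 0) := by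
    have := (tendsto_rpow_mul_exp_neg_mul_atTop_nhds_zero a (θ / 2) (by positivity)).div_const a
    rw [zero_div] at this
    exact this.congr fun T => by ring
  have h_end : Tendsto (fun T => (T / 2) ^ (a - 1) * θ⁻¹) atTop (𝓝 0) := by
    have := ((tendsto_rpow_neg_atTop (by linarith : 0 < 1 - a)).comp
      (tendsto_id.atTop_div_const two_pos)).mul_const θ⁻¹
    simpa using this
  refine tendsto_of_tendsto_of_tendsto_of_le_of_le' tendsto_const_nhds
    (by simpa only [add_zero] using h_origin.add h_end) ?_ ?_
  · filter_upwards with T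
    refine setIntegral_nonneg measurableSet_Ioc fun t ht => ?_
    have := rpow_nonneg ht.1.le (a - 1)
    positivity
  · filter_upwards [eventually_ge_atTop 0] with T hT
    exact setIntegral_Ioc_exp_sub_mul_rpow_le ha0 ha1.le hθ hT

theorem stmt19 (H θ : ℝ) (hH : H ∈ Set.Ioo (0:ℝ) (1/2)) (hθ : 0 < θ) :
    Filter.Tendsto
      (fun T : ℝ =>
        θ * (∫ t in Set.Ioc (0:ℝ) T, ∫ s in Set.Ioc (0:ℝ) T,
            Real.exp (-θ * (T - t) - θ * (T - s)) *
              (H * (t ^ (2*H - 1) - Real.sign (t - s) * |t - s| ^ (2*H - 1))))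
          + ∫ t in Set.Ioc (0:ℝ) T,
              Real.exp (-θ * (T - t)) * (H * (t ^ (2*H - 1) + (T - t) ^ (2*H - 1))))
      Filter.atTop
      (nhds (H * Real.Gamma (2*H) * θ ^ (-(2*H)))) := by
  obtain ⟨hH0, hH1⟩ := hH
  have hp : -1 < 2 * H - 1 := by linarith
  have hA := tendsto_setIntegral_Ioc_exp_sub_mul_rpow_zero (a := 2 * H) (by linarith)
    (by linarith) hθ
  have hJ := tendsto_setIntegral_Ioc_exp_neg_mul_rpow (a := 2 * H) (by linarith) hθ
  have hG := tendsto_setIntegral_Ioc_exp_neg_mul_rpow one_pos hθ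
  simp only [sub_self, rpow_zero, mul_one] at hG
  have hlim := ((((hA.mul hG).const_mul θ).add hA).add hJ).const_mul H
  rw [show H * (θ * (0 * (Gamma 1 * θ ^ (-1 : ℝ))) + 0 + Gamma (2 * H) * θ ^ (-(2 * H)))
      = H * Gamma (2 * H) * θ ^ (-(2 * H)) by ring] at hlim
  refine hlim.congr' ?_
  filter_upwards [eventually_ge_atTop 0] with T hT
  rw [integral_integral_exp_mul_fbm_kernel H hp hθ hT, integral_exp_mul_fbm_boundary H hp hT]
  ring
end
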